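/- arXiv:2006.09734 — 4 statements merged into one kernel-verified Lean document; each statement's English description precedes it below -/
import Mathlib

section
/- Let Φ: ℝⁿ ⇒ ℝᵐ be a polyhedral set-valued mapping, i.e., gph Φ is the union of finitely many convex polyhedral sets. Then every feasible point x̄ ∈ M := {x | 0 ∈ Φ(x)} is AM-regular. -/
open Filter Topology RealInnerProductSpace
open scoped ENNReal NNReal

noncomputable section

/-- Fréchet (regular) normal cone to `A` at `x`. -/
def frechetNC {E : Type*} [NormedAddCommGroup E] [InnerProductSpace ℝ E]
    (A : Set E) (x : E) : Set E :=
  {v | x ∈ A ∧ ∀ ε > 0, ∃ δ > 0, ∀ y ∈ A, ‖y - x‖ < δ → ⟪v, y - x⟫ ≤ ε * ‖y - x‖}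

/-- Limiting (Mordukhovich) normal cone to `A` at `x`. -/
def limitingNC {E : Type*} [NormedAddCommGroup E] [InnerProductSpace ℝ E]
    (A : Set E) (x : E) : Set E :=
  {v | ∃ xk vk : ℕ → E, (∀ k, xk k ∈ A) ∧ Tendsto xk atTop (𝓝 x) ∧
    (∀ k, vk k ∈ frechetNC A (xk k)) ∧ Tendsto vk atTop (𝓝 v)}

section SV
variable {E F : Type*} [NormedAddCommGroup E] [InnerProductSpace ℝ E]
  [NormedAddCommGroup F] [InnerProductSpace ℝ F]

/-- Pack a pair into the `ℓ²` product space. -/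
def pl2 (x : E) (y : F) : WithLp 2 (E × F) := (WithLp.equiv 2 (E × F)).symm (x, y)

/-- Graph of a set-valued map, as a subset of the `ℓ²` product space. -/
def svGraph (Φ : E → Set F) : Set (WithLp 2 (E × F)) :=
  {p | (WithLp.equiv 2 (E × F) p).2 ∈ Φ (WithLp.equiv 2 (E × F) p).1}

/-- Limiting coderivative `D*Φ(x,y)(ys)`. -/
def coderiv (Φ : E → Set F) (x : E) (y : F) (ys : F) : Set E :=
  {xs | pl2 xs (-ys) ∈ limitingNC (svGraph Φ) (pl2 x y)}

/-- Limiting subdifferential of a real-valued function. -/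
def limSubdiff (f : E → ℝ) (x : E) : Set E :=
  {v | pl2 v (-1 : ℝ) ∈ limitingNC
    {p : WithLp 2 (E × ℝ) | f (WithLp.equiv 2 (E × ℝ) p).1 ≤ (WithLp.equiv 2 (E × ℝ) p).2}
    (pl2 x (f x))}

/-- The multiplier-union map `𝓜(x,y) = ⋃_λ D*Φ(x,y)(λ)`. -/
def Mmap (Φ : E → Set F) (x : E) (y : F) : Set E := ⋃ l : F, coderiv Φ x y l

/-- Outer limit `Limsup_{x→x̄,y→0} 𝓜(x,y)`. -/
def MmapLimsup (Φ : E → Set F) (xb : E) : Set E :=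
  {xs | ∃ (xk xsk : ℕ → E) (yk : ℕ → F), Tendsto xk atTop (𝓝 xb) ∧
    Tendsto yk atTop (𝓝 0) ∧ Tendsto xsk atTop (𝓝 xs) ∧
    ∀ k, xsk k ∈ Mmap Φ (xk k) (yk k)}

/-- AM-regularity. -/
def AMregular (Φ : E → Set F) (xb : E) : Prop := MmapLimsup Φ xb ⊆ Mmap Φ xb 0
end SV

section NormOnly
variable {E F : Type*} [NormedAddCommGroup E] [NormedAddCommGroup F]

/-- Generalized distance function `ρ_Γ`, with value `+∞` when `Γ x = ∅`. -/
def rhoD (Γ : E → Set F) (x : E) (y : F) : ℝ≥0∞ := ⨅ z ∈ Γ x, (‖y - z‖₊ : ℝ≥0∞)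

/-- Set of projections `Π(y, Γ x)`. -/
def projSet (Γ : E → Set F) (x : E) (y : F) : Set F :=
  {z | z ∈ Γ x ∧ (‖y - z‖₊ : ℝ≥0∞) = rhoD Γ x y}

/-- Aubin property of `Φ` at `(xb, yb) ∈ gph Φ`. -/
def AubinAt (Φ : E → Set F) (xb : E) (yb : F) : Prop :=
  ∃ U ∈ 𝓝 xb, ∃ V ∈ 𝓝 yb, ∃ κ : ℝ, 0 < κ ∧
    ∀ x ∈ U, ∀ x' ∈ U, ∀ z ∈ Φ x ∩ V, ∃ w ∈ Φ x', ‖z - w‖ ≤ κ * ‖x - x'‖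
end NormOnly


/-- A convex polyhedral set: an intersection of finitely many closed half-spaces. -/
def IsPolyhedralSet {E : Type*} [NormedAddCommGroup E] [InnerProductSpace ℝ E]
    (S : Set E) : Prop :=
  ∃ (k : ℕ) (a : Fin k → E) (b : Fin k → ℝ), S = {z | ∀ i, ⟪a i, z⟫ ≤ b i}


section Dev

variable {V : Type*} [NormedAddCommGroup V] [InnerProductSpace ℝ V] [FiniteDimensional ℝ V]

/-- H-polyhedron: solution set of finitely many linear inequalities. -/
def IsHP (S : Set V) : Prop :=
  ∃ (k : ℕ) (f : Fin k → V →ₗ[ℝ] ℝ) (b : Fin k → ℝ), S = {x | ∀ i, f i x ≤ b i}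

lemma IsHP_of_fintype {ι : Type} [Fintype ι] (f : ι → V →ₗ[ℝ] ℝ) (b : ι → ℝ) :
    IsHP {x : V | ∀ i, f i x ≤ b i} := by
  refine ⟨Fintype.card ι, fun i => f ((Fintype.equivFin ι).symm i),
    fun i => b ((Fintype.equivFin ι).symm i), ?_⟩
  ext x
  constructor
  · intro h i; exact h _
  · intro h i
    have := h (Fintype.equivFin ι i)
    simpa using this

lemma IsHP.isClosed {S : Set V} (h : IsHP S) : IsClosed S := by
  obtain ⟨k, f, b, rfl⟩ := h
  have : {x : V | ∀ i, f i x ≤ b i} = ⋂ i, {x | f i x ≤ b i} := by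
    ext x; simp
  rw [this]
  exact isClosed_iInter fun i =>
    isClosed_le ((f i).continuous_of_finiteDimensional) continuous_const

lemma IsHP.convex {S : Set V} (h : IsHP S) : Convex ℝ S := by
  obtain ⟨k, f, b, rfl⟩ := h
  have : {x : V | ∀ i, f i x ≤ b i} = ⋂ i, {x | f i x ≤ b i} := by ext x; simp
  rw [this]
  exact convex_iInter fun i => convex_halfSpace_le ⟨fun a b => map_add _ a b, fun c a => map_smul _ c a⟩ _

/-- Fourier–Motzkin core: elimination of one real variable. -/
lemma fm_real {ι : Type} [Fintype ι] (L c b : ι → ℝ) :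
    (∃ s : ℝ, ∀ i, L i + c i * s ≤ b i) ↔
      ((∀ i, c i = 0 → L i ≤ b i) ∧
        ∀ i i', 0 < c i → c i' < 0 → c i' * (b i - L i) ≤ c i * (b i' - L i')) := by
  constructor
  · rintro ⟨s, hs⟩
    constructor
    · intro i hi; have := hs i; rw [hi] at this; linarith
    · intro i i' hi hi'
      have h1 : s ≤ (b i - L i) / c i := by
        have := hs i; rw [le_div_iff₀ hi]; linarith
      have h2 : (b i' - L i') / c i' ≤ s := by
        have := hs i'; rw [div_le_iff_of_neg hi']; linarith
      have h3 : (b i' - L i') / c i' ≤ (b i - L i) / c i := le_trans h2 h1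
      -- multiply by c i > 0 then by c i' < 0
      have h4 : c i * ((b i' - L i') / c i') ≤ b i - L i := by
        rw [mul_comm, ← le_div_iff₀ hi] at *; exact h3
      calc c i' * (b i - L i) ≤ c i' * (c i * ((b i' - L i') / c i')) := by
            exact mul_le_mul_of_nonpos_left h4 (le_of_lt hi')
        _ = c i * (c i' * ((b i' - L i') / c i')) := by ring
        _ = c i * (b i' - L i') := by
            rw [mul_div_cancel₀ _ (ne_of_lt hi')]
  · rintro ⟨h0, hp⟩
    classical
    by_cases hU : (Finset.univ.filter (fun i => 0 < c i)).Nonempty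
    · set s := (Finset.univ.filter (fun i => 0 < c i)).inf' hU (fun i => (b i - L i) / c i) with hsdef
      refine ⟨s, fun i => ?_⟩
      rcases lt_trichotomy (c i) 0 with hci | hci | hci
      · -- lower bound case: s ≥ (b i - L i)/c i
        obtain ⟨i0, hi0mem, hi0⟩ := Finset.exists_mem_eq_inf' hU (fun i => (b i - L i) / c i)
        have hi0pos : 0 < c i0 := (Finset.mem_filter.1 hi0mem).2
        have hpair := hp i0 i hi0pos hci
        have hcancel : c i0 * ((b i - L i) / c i) * c i = c i0 * (b i - L i) := by
          field_simp
          exact mul_div_cancel_right₀ _ hci.ne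
        have key : c i * (b i0 - L i0) - c i * (c i0 * ((b i - L i) / c i)) ≤ 0 := by
          nlinarith [hpair, hcancel]
        have hX : 0 ≤ (b i0 - L i0) - c i0 * ((b i - L i) / c i) := by nlinarith [key, hci]
        have this1 : (b i - L i) / c i ≤ (b i0 - L i0) / c i0 := by
          rw [le_div_iff₀ hi0pos]; linarith
        have hs_ge : (b i - L i) / c i ≤ s := by rw [hsdef, hi0]; exact this1
        have := (div_le_iff_of_neg hci).1 hs_ge
        linarith
      · have := h0 i hci; rw [hci]; linarith
      · have hs_le : s ≤ (b i - L i) / c i :=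
          Finset.inf'_le (fun i => (b i - L i) / c i) (by simp [hci])
        rw [le_div_iff₀ hci] at hs_le; linarith
    · by_cases hLo : (Finset.univ.filter (fun i => c i < 0)).Nonempty
      · set s := (Finset.univ.filter (fun i => c i < 0)).sup' hLo (fun i => (b i - L i) / c i) with hsdef
        refine ⟨s, fun i => ?_⟩
        rcases lt_trichotomy (c i) 0 with hci | hci | hci
        · have hs_ge : (b i - L i) / c i ≤ s :=
            Finset.le_sup' (fun i => (b i - L i) / c i) (by simp [hci])
          have := (div_le_iff_of_neg hci).1 hs_ge
          linarith
        · have := h0 i hci; rw [hci]; linarith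
        · exact absurd ⟨i, Finset.mem_filter.2 ⟨Finset.mem_univ _, hci⟩⟩ hU
      · refine ⟨0, fun i => ?_⟩
        rcases lt_trichotomy (c i) 0 with hci | hci | hci
        · exact absurd ⟨i, Finset.mem_filter.2 ⟨Finset.mem_univ _, hci⟩⟩ hLo
        · have := h0 i hci; rw [hci]; linarith
        · exact absurd ⟨i, Finset.mem_filter.2 ⟨Finset.mem_univ _, hci⟩⟩ hU
set_option maxHeartbeats 1000000 in
lemma fm_elim (r : ℕ) : ∀ {ι : Type} [Fintype ι] (f : ι → V →ₗ[ℝ] ℝ) (c : ι → Fin r → ℝ)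
    (b : ι → ℝ), IsHP {x : V | ∃ t : Fin r → ℝ, ∀ i, f i x + ∑ j, c i j * t j ≤ b i} := by
  induction r with
  | zero =>
    intro ι _ f c b
    have : {x : V | ∃ t : Fin 0 → ℝ, ∀ i, f i x + ∑ j, c i j * t j ≤ b i}
        = {x : V | ∀ i, f i x ≤ b i} := by
      ext x; simp
    rw [this]
    exact IsHP_of_fintype f b
  | succ r ih =>
    intro ι _ f c b
    classical
    set cl : ι → ℝ := fun i => c i (Fin.last r) with hcl
    set F : ι ⊕ ι × ι → V →ₗ[ℝ] ℝ := Sum.elim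
      (fun i => if cl i = 0 then f i else 0)
      (fun q => if 0 < cl q.1 ∧ cl q.2 < 0 then cl q.1 • f q.2 - cl q.2 • f q.1 else 0)
      with hF
    set C : ι ⊕ ι × ι → Fin r → ℝ := Sum.elim
      (fun i j => if cl i = 0 then c i j.castSucc else 0)
      (fun q j => if 0 < cl q.1 ∧ cl q.2 < 0 then
        cl q.1 * c q.2 j.castSucc - cl q.2 * c q.1 j.castSucc else 0)
      with hC
    set B : ι ⊕ ι × ι → ℝ := Sum.elim
      (fun i => if cl i = 0 then b i else 0)
      (fun q => if 0 < cl q.1 ∧ cl q.2 < 0 then cl q.1 * b q.2 - cl q.2 * b q.1 else 0)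
      with hB
    have key : {x : V | ∃ t : Fin (r+1) → ℝ, ∀ i, f i x + ∑ j, c i j * t j ≤ b i}
        = {x : V | ∃ t' : Fin r → ℝ, ∀ i, F i x + ∑ j, C i j * t' j ≤ B i} := by
      ext x
      simp only [Set.mem_setOf_eq]
      constructor
      · rintro ⟨t, ht⟩
        refine ⟨fun j => t j.castSucc, ?_⟩
        set t' : Fin r → ℝ := fun j => t j.castSucc with ht'
        set L : ι → ℝ := fun i => f i x + ∑ j : Fin r, c i j.castSucc * t' j with hL
        have hsum : ∀ i, f i x + ∑ j, c i j * t j = L i + cl i * t (Fin.last r) := by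
          intro i
          rw [hL, hcl]
          simp only [Fin.sum_univ_castSucc]
          ring
        have hfm : ∃ s : ℝ, ∀ i, L i + cl i * s ≤ b i :=
          ⟨t (Fin.last r), fun i => by rw [← hsum i]; exact ht i⟩
        obtain ⟨h0, hp⟩ := (fm_real L cl b).1 hfm
        rintro (i | ⟨i, i'⟩)
        · by_cases h : cl i = 0
          · have := h0 i h
            simpa [hF, hC, hB, h, hL] using this
          · simp [hF, hC, hB, h]
        · by_cases h : 0 < cl i ∧ cl i' < 0
          · have := hp i i' h.1 h.2
            have expand : F (Sum.inr (i, i')) x + ∑ j, C (Sum.inr (i, i')) j * t' j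
                = cl i * L i' - cl i' * L i := by
              simp only [hF, hC, hL, Sum.elim_inr, if_pos h, LinearMap.sub_apply,
                LinearMap.smul_apply, smul_eq_mul]
              rw [show (∑ j, (cl i * c i' j.castSucc - cl i' * c i j.castSucc) * t' j)
                  = cl i * ∑ j, c i' j.castSucc * t' j
                    - cl i' * ∑ j, c i j.castSucc * t' j by
                rw [Finset.mul_sum, Finset.mul_sum, ← Finset.sum_sub_distrib]
                exact Finset.sum_congr rfl fun j _ => by ring]
              ring
            rw [expand]
            have hBval : B (Sum.inr (i, i')) = cl i * b i' - cl i' * b i := by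
              simp [hB, h]
            rw [hBval]
            linarith
          · simp [hF, hC, hB, h]
      · rintro ⟨t', ht'⟩
        set L : ι → ℝ := fun i => f i x + ∑ j : Fin r, c i j.castSucc * t' j with hL
        have h0 : ∀ i, cl i = 0 → L i ≤ b i := by
          intro i h
          have := ht' (Sum.inl i)
          simpa [hF, hC, hB, h, hL] using this
        have hp : ∀ i i', 0 < cl i → cl i' < 0 → cl i' * (b i - L i) ≤ cl i * (b i' - L i') := by
          intro i i' hi hi'
          have := ht' (Sum.inr (i, i'))
          have expand : F (Sum.inr (i, i')) x + ∑ j, C (Sum.inr (i, i')) j * t' j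
              = cl i * L i' - cl i' * L i := by
            simp only [hF, hC, hL, Sum.elim_inr, if_pos (And.intro hi hi'), LinearMap.sub_apply,
              LinearMap.smul_apply, smul_eq_mul]
            rw [show (∑ j, (cl i * c i' j.castSucc - cl i' * c i j.castSucc) * t' j)
                = cl i * ∑ j, c i' j.castSucc * t' j
                  - cl i' * ∑ j, c i j.castSucc * t' j by
              rw [Finset.mul_sum, Finset.mul_sum, ← Finset.sum_sub_distrib]
              exact Finset.sum_congr rfl fun j _ => by ring]
            ring
          rw [expand] at this
          have hBval : B (Sum.inr (i, i')) = cl i * b i' - cl i' * b i := by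
            simp [hB, hi, hi']
          rw [hBval] at this
          linarith
        obtain ⟨s, hs⟩ := (fm_real L cl b).2 ⟨h0, hp⟩
        refine ⟨Fin.snoc t' s, fun i => ?_⟩
        have hsum : f i x + ∑ j, c i j * (Fin.snoc t' s : Fin (r+1) → ℝ) j
            = L i + cl i * s := by
          rw [hL, hcl]
          simp only [Fin.sum_univ_castSucc, Fin.snoc_castSucc, Fin.snoc_last]
          ring
        rw [hsum]
        exact hs i
    rw [key]
    exact ih F C B
lemma IsHP_univ : IsHP (Set.univ : Set V) := by
  refine ⟨0, fun i => 0, fun i => 0, ?_⟩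
  ext x; simp

lemma IsHP.inter {S T : Set V} (hS : IsHP S) (hT : IsHP T) : IsHP (S ∩ T) := by
  obtain ⟨k, f, b, rfl⟩ := hS
  obtain ⟨k', g, d, rfl⟩ := hT
  have : {x : V | ∀ i, f i x ≤ b i} ∩ {x | ∀ i, g i x ≤ d i}
      = {x : V | ∀ i : Fin k ⊕ Fin k', Sum.elim f g i x ≤ Sum.elim b d i} := by
    ext x
    constructor
    · rintro ⟨h1, h2⟩ (i | i)
      · exact h1 i
      · exact h2 i
    · intro h
      exact ⟨fun i => h (Sum.inl i), fun i => h (Sum.inr i)⟩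
  rw [this]
  exact IsHP_of_fintype _ _

lemma IsHP_biInter {ι : Type*} (s : Finset ι) (S : ι → Set V)
    (h : ∀ i ∈ s, IsHP (S i)) : IsHP (⋂ i ∈ s, S i) := by
  classical
  induction s using Finset.induction_on with
  | empty => simpa using IsHP_univ
  | insert _ _ hni ih =>
      rw [Finset.set_biInter_insert]
      exact (h _ (Finset.mem_insert_self _ _)).inter
        (ih fun i hi => h i (Finset.mem_insert_of_mem hi))

/-- Finitely generated cone. -/
def FGcone {ι : Type} [Fintype ι] (a : ι → V) : Set V :=
  {v | ∃ μ : ι → ℝ, (∀ j, 0 ≤ μ j) ∧ v = ∑ j, μ j • a j}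

lemma FGcone_zero_mem {ι : Type} [Fintype ι] (a : ι → V) : (0 : V) ∈ FGcone a :=
  ⟨0, fun j => le_refl _, by simp⟩

lemma FGcone_smul_mem {ι : Type} [Fintype ι] (a : ι → V) {v : V} (hv : v ∈ FGcone a)
    {t : ℝ} (ht : 0 ≤ t) : t • v ∈ FGcone a := by
  obtain ⟨μ, hμ, rfl⟩ := hv
  exact ⟨fun j => t * μ j, fun j => mul_nonneg ht (hμ j),
    by rw [Finset.smul_sum]; exact Finset.sum_congr rfl fun j _ => (smul_smul t (μ j) (a j))⟩

lemma FGcone_mem_single {ι : Type} [Fintype ι] (a : ι → V) (j0 : ι) : a j0 ∈ FGcone a := by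
  classical
  refine ⟨fun j => if j = j0 then 1 else 0, fun j => by positivity, ?_⟩
  simp [ite_smul]

set_option maxHeartbeats 1000000 in
lemma FGcone_isHP {ι : Type} [Fintype ι] (a : ι → V) : IsHP (FGcone a) := by
  classical
  set N := Module.finrank ℝ V with hN
  set Bs : Module.Basis (Fin N) ℝ V := Module.finBasis ℝ V with hBs
  set e := Fintype.equivFin ι with he
  set r := Fintype.card ι with hr
  set coord : Fin N → V →ₗ[ℝ] ℝ :=
    fun l => (LinearMap.proj l) ∘ₗ Bs.equivFun.toLinearMap with hcoord
  set F : ι ⊕ (Fin N ⊕ Fin N) → V →ₗ[ℝ] ℝ :=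
    Sum.elim (fun _ => 0) (Sum.elim coord (fun l => -coord l)) with hFd
  set C : (ι ⊕ (Fin N ⊕ Fin N)) → Fin r → ℝ := Sum.elim
    (fun j j' => if e j = j' then (-1 : ℝ) else 0)
    (Sum.elim (fun l j' => -(coord l (a (e.symm j'))))
      (fun l j' => coord l (a (e.symm j')))) with hCd
  set B : ι ⊕ (Fin N ⊕ Fin N) → ℝ := fun _ => 0 with hBd
  have hkey : FGcone a = {x : V | ∃ t : Fin r → ℝ, ∀ i, F i x + ∑ j, C i j * t j ≤ B i} := by
    ext x
    simp only [FGcone, Set.mem_setOf_eq]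
    constructor
    · rintro ⟨μ, hμ, rfl⟩
      refine ⟨fun j' => μ (e.symm j'), ?_⟩
      have hcx : ∀ l, coord l (∑ j, μ j • a j) = ∑ j, μ j * coord l (a j) := by
        intro l
        rw [map_sum]
        exact Finset.sum_congr rfl fun j _ => by rw [map_smul, smul_eq_mul]
      have hreidx : ∀ l, (∑ j' : Fin r, coord l (a (e.symm j')) * μ (e.symm j'))
          = ∑ j, μ j * coord l (a j) := by
        intro l
        rw [← e.symm.sum_comp (fun j => μ j * coord l (a j))]
        exact Finset.sum_congr rfl fun j' _ => by ring
      rintro (j | (l | l))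
      · simp only [hFd, hCd, hBd, Sum.elim_inl, LinearMap.zero_apply, zero_add, ite_mul,
          zero_mul, Finset.sum_ite_eq, Finset.mem_univ, if_true]
        have := hμ (e.symm (e j))
        linarith
      · simp only [hFd, hCd, hBd, Sum.elim_inr, Sum.elim_inl]
        rw [hcx l]
        have : (∑ j', -(coord l (a (e.symm j'))) * μ (e.symm j'))
            = -(∑ j' : Fin r, coord l (a (e.symm j')) * μ (e.symm j')) := by
          rw [← Finset.sum_neg_distrib]
          exact Finset.sum_congr rfl fun j' _ => by ring
        rw [this, hreidx l]
        simp
      · simp only [hFd, hCd, hBd, Sum.elim_inr, Sum.elim_inl, LinearMap.neg_apply]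
        rw [hcx l, hreidx l]
        simp
    · rintro ⟨t, ht⟩
      refine ⟨fun j => t (e j), fun j => ?_, ?_⟩
      · have := ht (Sum.inl j)
        simp only [hFd, hCd, hBd, Sum.elim_inl, LinearMap.zero_apply, zero_add, ite_mul,
          zero_mul, Finset.sum_ite_eq, Finset.mem_univ, if_true] at this
        linarith
      · apply Bs.equivFun.injective
        funext l
        have h1 := ht (Sum.inr (Sum.inl l))
        have h2 := ht (Sum.inr (Sum.inr l))
        simp only [hFd, hCd, hBd, Sum.elim_inr, Sum.elim_inl, LinearMap.neg_apply] at h1 h2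
        have hx : coord l x = ∑ j', coord l (a (e.symm j')) * t j' := by
          have e1 : (∑ j', -(coord l (a (e.symm j'))) * t j')
              = -(∑ j' : Fin r, coord l (a (e.symm j')) * t j') := by
            rw [← Finset.sum_neg_distrib]
            exact Finset.sum_congr rfl fun j' _ => by ring
          rw [e1] at h1
          linarith
        have hcx : coord l (∑ j, t (e j) • a j) = ∑ j, t (e j) * coord l (a j) := by
          rw [map_sum]
          exact Finset.sum_congr rfl fun j _ => by rw [map_smul, smul_eq_mul]
        have : Bs.equivFun x l = coord l x := rfl
        rw [this, hx]
        have : Bs.equivFun (∑ j, t (e j) • a j) l = coord l (∑ j, t (e j) • a j) := rfl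
        rw [this, hcx]
        rw [← e.symm.sum_comp (fun j => t (e j) * coord l (a j))]
        exact Finset.sum_congr rfl fun j' _ => by rw [e.apply_symm_apply]; ring
  rw [hkey]
  exact fm_elim r F C B

/-- Farkas-type lemma: a vector in the polar of `{d | ∀ j, ⟪a j, d⟫ ≤ 0}` lies in
the cone generated by the `a j`. -/
lemma farkas {ι : Type} [Fintype ι] (a : ι → V) (v : V)
    (h : ∀ d : V, (∀ j, ⟪a j, d⟫ ≤ 0) → ⟪v, d⟫ ≤ 0) : v ∈ FGcone a := by
  by_contra hv
  obtain ⟨g, u, hgs, hgv⟩ := geometric_hahn_banach_closed_point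
    (FGcone_isHP a).convex (FGcone_isHP a).isClosed hv
  have hu0 : 0 < u := by
    have := hgs 0 (FGcone_zero_mem a)
    simpa using this
  have hg_nonpos : ∀ w ∈ FGcone a, g w ≤ 0 := by
    intro w hw
    by_contra hgw
    push_neg at hgw
    obtain ⟨t, ht, htu⟩ : ∃ t : ℝ, 0 ≤ t ∧ u < t * g w := by
      refine ⟨(u + 1) / g w, by positivity, ?_⟩
      rw [div_mul_cancel₀ _ (ne_of_gt hgw)]
      linarith
    have := hgs (t • w) (FGcone_smul_mem a hw ht)
    rw [map_smul, smul_eq_mul] at this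
    linarith
  set d := (InnerProductSpace.toDual ℝ V).symm g with hd
  have hdip : ∀ w : V, ⟪d, w⟫ = g w := by
    intro w
    have := InnerProductSpace.toDual_symm_apply (𝕜 := ℝ) (E := V) (y := g) (x := w)
    rw [← hd] at this
    exact this
  have hda : ∀ j, ⟪a j, d⟫ ≤ 0 := by
    intro j
    rw [real_inner_comm, hdip]
    exact hg_nonpos _ (FGcone_mem_single a j)
  have hvd : ⟪v, d⟫ ≤ 0 := h d hda
  rw [real_inner_comm, hdip] at hvd
  linarith
open RealInnerProductSpace in
set_option maxHeartbeats 1000000 in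
lemma frechet_formula {W : Type*} [NormedAddCommGroup W] [InnerProductSpace ℝ W]
    [FiniteDimensional ℝ W]
    {p : ℕ} {k : Fin p → ℕ} (a : ∀ i, Fin (k i) → W) (b : ∀ i, Fin (k i) → ℝ)
    (D : Fin p → Set W) (hD : ∀ i, D i = {z | ∀ j, ⟪a i j, z⟫ ≤ b i j})
    (w : W) (hw : w ∈ ⋃ i, D i)
    (S : Finset (Fin p)) (J : ∀ i, Finset (Fin (k i)))
    (hS : ∀ i, i ∈ S ↔ w ∈ D i)
    (hJ : ∀ i, ∀ j, j ∈ J i ↔ ⟪a i j, w⟫ = b i j) :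
    frechetNC (⋃ i, D i) w = ⋂ i ∈ S, FGcone (fun j : {j // j ∈ J i} => a i j.1) := by
  have hDclosed : ∀ i, IsClosed (D i) := by
    intro i
    rw [hD i]
    have : {z : W | ∀ j, ⟪a i j, z⟫ ≤ b i j} = ⋂ j, {z | ⟪a i j, z⟫ ≤ b i j} := by
      ext z; simp
    rw [this]
    exact isClosed_iInter fun j =>
      isClosed_le (Continuous.inner continuous_const continuous_id) continuous_const
  ext v
  constructor
  · -- ⊆ : Fréchet normal lies in each FG cone, via Farkas
    intro hv
    obtain ⟨hwA, hvfre⟩ := hv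
    rw [Set.mem_iInter₂]
    intro i hiS
    have hwDi : w ∈ D i := (hS i).1 hiS
    apply farkas
    intro d hd
    by_cases hd0 : d = 0
    · simp [hd0]
    have hdn : (0:ℝ) < ‖d‖ := norm_pos_iff.2 hd0
    have key : ∀ ε > (0:ℝ), ⟪v, d⟫ ≤ ε * ‖d‖ := by
      intro ε hε
      obtain ⟨δ, hδpos, hδ⟩ := hvfre ε hε
      have hmemD : ∀ᶠ t in 𝓝[>] (0:ℝ), ∀ j, ⟪a i j, w + t • d⟫ ≤ b i j := by
        rw [eventually_all]
        intro j
        by_cases hj : j ∈ J i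
        · filter_upwards [eventually_mem_nhdsWithin] with t ht
          have ht' : (0:ℝ) < t := ht
          have hadj : ⟪a i j, d⟫ ≤ 0 := hd ⟨j, hj⟩
          rw [inner_add_right, real_inner_smul_right, (hJ i j).1 hj]
          nlinarith
        · have hslack : ⟪a i j, w⟫ < b i j := by
            have hle : ⟪a i j, w⟫ ≤ b i j := by
              rw [hD i] at hwDi; exact hwDi j
            exact lt_of_le_of_ne hle (fun hEq => hj ((hJ i j).2 hEq))
          have hcont : Tendsto (fun t : ℝ => ⟪a i j, w + t • d⟫) (𝓝[>] 0)
              (𝓝 ⟪a i j, w + (0:ℝ) • d⟫) := by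
            apply Tendsto.mono_left _ nhdsWithin_le_nhds
            exact ((Continuous.inner continuous_const
              (continuous_const.add (continuous_id.smul continuous_const))).tendsto 0)
          have h0 : ⟪a i j, w + (0:ℝ) • d⟫ = ⟪a i j, w⟫ := by simp
          rw [h0] at hcont
          filter_upwards [hcont.eventually_lt_const hslack] with t ht
          exact le_of_lt ht
      have hnorm : ∀ᶠ t in 𝓝[>] (0:ℝ), ‖(w + t • d) - w‖ < δ := by
        have hcont : Tendsto (fun t : ℝ => ‖(w + t • d) - w‖) (𝓝[>] 0) (𝓝 ‖(w + (0:ℝ) • d) - w‖) := by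
          apply Tendsto.mono_left _ nhdsWithin_le_nhds
          exact (Continuous.norm ((continuous_const.add (continuous_id.smul continuous_const)).sub
            continuous_const)).tendsto 0
        have h0 : ‖(w + (0:ℝ) • d) - w‖ = 0 := by simp
        rw [h0] at hcont
        exact hcont.eventually_lt_const hδpos
      obtain ⟨t, htpos, hmem, hnrm⟩ :=
        (eventually_mem_nhdsWithin.and (hmemD.and hnorm)).exists
      have htpos' : (0:ℝ) < t := htpos
      have hyA : w + t • d ∈ ⋃ i', D i' := by
        refine Set.mem_iUnion.2 ⟨i, ?_⟩
        rw [hD i]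
        exact hmem
      have := hδ (w + t • d) hyA hnrm
      rw [add_sub_cancel_left] at this
      rw [real_inner_smul_right, norm_smul] at this
      rw [Real.norm_eq_abs, abs_of_pos htpos'] at this
      have := le_of_mul_le_mul_left (by linarith [this] : t * ⟪v, d⟫ ≤ t * (ε * ‖d‖)) htpos'
      exact this
    by_contra hpos
    push_neg at hpos
    have hεp : (0:ℝ) < ⟪v, d⟫ / (2 * ‖d‖) := by positivity
    have := key _ hεp
    have h2 : ⟪v, d⟫ / (2 * ‖d‖) * ‖d‖ = ⟪v, d⟫ / 2 := by
      field_simp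
    rw [h2] at this
    linarith
  · -- ⊇ : elements of the FG cones are Fréchet normals
    intro hv
    rw [Set.mem_iInter₂] at hv
    refine ⟨hw, fun ε hε => ?_⟩
    -- δ from distance to the polyhedra not containing w
    set T : Set W := ⋃ i ∈ (Finset.univ \ S : Finset (Fin p)), D i with hT
    have hTclosed : IsClosed T := by
      apply Set.Finite.isClosed_biUnion (Finset.finite_toSet _)
      intro i _
      exact hDclosed i
    have hwT : w ∉ T := by
      rw [hT]
      simp only [Set.mem_iUnion]
      rintro ⟨i, hi, hwDi⟩
      have : i ∈ S := (hS i).2 hwDi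
      simp only [Finset.mem_coe, Finset.mem_sdiff] at hi
      exact hi.2 this
    obtain ⟨δ, hδpos, hball⟩ :=
      Metric.mem_nhds_iff.1 (hTclosed.isOpen_compl.mem_nhds hwT)
    refine ⟨δ, hδpos, fun y hy hynorm => ?_⟩
    obtain ⟨i, hyDi⟩ := Set.mem_iUnion.1 hy
    have hiS : i ∈ S := by
      by_contra hiS
      have hyT : y ∈ T := by
        rw [hT]
        refine Set.mem_biUnion ?_ hyDi
        exact Finset.mem_sdiff.2 ⟨Finset.mem_univ _, hiS⟩
      have : y ∈ Metric.ball w δ := by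
        rw [Metric.mem_ball, dist_eq_norm]
        exact hynorm
      exact (hball this) hyT
    obtain ⟨μ, hμ, hvrep⟩ := hv i hiS
    have hinner : ⟪v, y - w⟫ ≤ 0 := by
      rw [hvrep, sum_inner]
      apply Finset.sum_nonpos
      intro j _
      rw [real_inner_smul_left]
      apply mul_nonpos_of_nonneg_of_nonpos (hμ j)
      rw [inner_sub_right]
      have h1 : ⟪a i j.1, y⟫ ≤ b i j.1 := by
        rw [hD i] at hyDi; exact hyDi j.1
      have h2 : ⟪a i j.1, w⟫ = b i j.1 := (hJ i j.1).1 j.2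
      linarith
    calc ⟪v, y - w⟫ ≤ 0 := hinner
      _ ≤ ε * ‖y - w‖ := by positivity
open RealInnerProductSpace in
set_option maxHeartbeats 1000000 in
lemma proj_isHP {E F : Type*} [NormedAddCommGroup E] [InnerProductSpace ℝ E]
    [FiniteDimensional ℝ E] [NormedAddCommGroup F] [InnerProductSpace ℝ F]
    [FiniteDimensional ℝ F]
    {C : Set (WithLp 2 (E × F))} (hC : IsHP C) :
    IsHP {ξ : E | ∃ μ : F, pl2 ξ μ ∈ C} := by
  classical
  obtain ⟨K, f, c, hCeq⟩ := hC
  set eqW := WithLp.prodContinuousLinearEquiv 2 ℝ E F with heqW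
  set inlW : E →ₗ[ℝ] WithLp 2 (E × F) :=
    (eqW.symm.toLinearEquiv.toLinearMap) ∘ₗ LinearMap.inl ℝ E F with hinlW
  set inrW : F →ₗ[ℝ] WithLp 2 (E × F) :=
    (eqW.symm.toLinearEquiv.toLinearMap) ∘ₗ LinearMap.inr ℝ E F with hinrW
  have hpl2 : ∀ (ξ : E) (μ : F), pl2 ξ μ = inlW ξ + inrW μ := by
    intro ξ μ
    have : inlW ξ + inrW μ = eqW.symm ((ξ, 0) + (0, μ)) := by
      rw [map_add]; rfl
    rw [this]
    have h2 : ((ξ, 0) : E × F) + (0, μ) = (ξ, μ) := by simp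
    rw [h2]
    rfl
  set NF := Module.finrank ℝ F with hNF
  set BF : Module.Basis (Fin NF) ℝ F := Module.finBasis ℝ F with hBF
  have hsum : ∀ (i : Fin K) (t : Fin NF → ℝ),
      f i (inrW (∑ j, t j • BF j)) = ∑ j, f i (inrW (BF j)) * t j := by
    intro i t
    rw [map_sum, map_sum]
    exact Finset.sum_congr rfl fun j _ => by rw [map_smul, map_smul, smul_eq_mul, mul_comm]
  have key : {ξ : E | ∃ μ : F, pl2 ξ μ ∈ C} =
      {ξ : E | ∃ t : Fin NF → ℝ, ∀ i,
        (f i ∘ₗ inlW) ξ + ∑ j, (f i (inrW (BF j))) * t j ≤ c i} := by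
    ext ξ
    simp only [Set.mem_setOf_eq, hCeq]
    constructor
    · rintro ⟨μ, hμ⟩
      refine ⟨BF.equivFun μ, fun i => ?_⟩
      have hrep : (∑ j, BF.equivFun μ j • BF j) = μ := BF.sum_equivFun μ
      have := hμ i
      rw [hpl2, map_add] at this
      rw [LinearMap.comp_apply, ← hsum i (BF.equivFun μ), hrep]
      exact this
    · rintro ⟨t, ht⟩
      refine ⟨∑ j, t j • BF j, fun i => ?_⟩
      rw [hpl2, map_add, hsum i t]
      exact ht i
  rw [key]
  exact fm_elim NF _ _ c

end Dev

set_option maxHeartbeats 2000000 in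
theorem polyhedral_implies_AM_regular (n m : ℕ)
    (Φ : EuclideanSpace ℝ (Fin n) → Set (EuclideanSpace ℝ (Fin m)))
    (hpoly : ∃ (p : ℕ)
      (D : Fin p → Set (WithLp 2 (EuclideanSpace ℝ (Fin n) × EuclideanSpace ℝ (Fin m)))),
      (∀ i, IsPolyhedralSet (D i)) ∧ svGraph Φ = ⋃ i, D i)
    (xb : EuclideanSpace ℝ (Fin n)) (hfeas : 0 ∈ Φ xb) :
    AMregular Φ xb := by
  classical
  obtain ⟨p, D, hDpoly, hgraph⟩ := hpoly
  choose kk aa bb hD using hDpoly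
  set eqW := WithLp.prodContinuousLinearEquiv 2 ℝ (EuclideanSpace ℝ (Fin n))
    (EuclideanSpace ℝ (Fin m)) with heqW
  set fstW : WithLp 2 (EuclideanSpace ℝ (Fin n) × EuclideanSpace ℝ (Fin m)) →
      EuclideanSpace ℝ (Fin n) :=
    fun q => (WithLp.equiv 2 (EuclideanSpace ℝ (Fin n) × EuclideanSpace ℝ (Fin m)) q).1
    with hfstW
  have hfstcont : Continuous fstW := continuous_fst.comp eqW.continuous
  intro xs hxs
  obtain ⟨xk, xsk, yk, hxk, hyk, hxsk, hmem⟩ := hxs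
  -- Step 1: diagonalization
  have hstep : ∀ K : ℕ, ∃ wu : WithLp 2 (EuclideanSpace ℝ (Fin n) × EuclideanSpace ℝ (Fin m)) ×
      WithLp 2 (EuclideanSpace ℝ (Fin n) × EuclideanSpace ℝ (Fin m)), wu.1 ∈ svGraph Φ ∧
      wu.2 ∈ frechetNC (svGraph Φ) wu.1 ∧
      dist wu.1 (pl2 (xk K) (yk K)) < 1/(K+1) ∧
      dist (fstW wu.2) (xsk K) < 1/(K+1) := by
    intro K
    have hK := hmem K
    obtain ⟨l, hl⟩ := Set.mem_iUnion.1 hK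
    simp only [coderiv, Set.mem_setOf_eq] at hl
    obtain ⟨zseq, vseq, hzA, hztend, hvfre, hvtend⟩ := hl
    have hpos : (0:ℝ) < 1/(K+1) := by positivity
    have h1 : ∀ᶠ j in atTop, dist (zseq j) (pl2 (xk K) (yk K)) < 1/(K+1) :=
      (Metric.tendsto_nhds.1 hztend) _ hpos
    have hfst : Tendsto (fun j => fstW (vseq j)) atTop (𝓝 (fstW (pl2 (xsk K) (-l)))) :=
      (hfstcont.tendsto _).comp hvtend
    have hfsteq : fstW (pl2 (xsk K) (-l)) = xsk K := rfl
    rw [hfsteq] at hfst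
    have h2 : ∀ᶠ j in atTop, dist (fstW (vseq j)) (xsk K) < 1/(K+1) :=
      (Metric.tendsto_nhds.1 hfst) _ hpos
    obtain ⟨j, hj1, hj2⟩ := (h1.and h2).exists
    exact ⟨(zseq j, vseq j), hzA j, hvfre j, hj1, hj2⟩
  choose wu hwA hufre hwdist hudist using hstep
  set w := fun K => (wu K).1 with hwdef
  set u := fun K => (wu K).2 with hudef
  -- Step 2: limits
  have hzlim : Tendsto (fun K => pl2 (xk K) (yk K)) atTop (𝓝 (pl2 xb 0)) := by
    have hprod : Tendsto (fun K => (xk K, yk K)) atTop (𝓝 (xb, 0)) :=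
      hxk.prodMk_nhds hyk
    exact (eqW.symm.continuous.tendsto _).comp hprod
  have hone : Tendsto (fun K : ℕ => 1/((K:ℝ)+1)) atTop (𝓝 0) :=
    tendsto_one_div_add_atTop_nhds_zero_nat
  have hwlim : Tendsto w atTop (𝓝 (pl2 xb 0)) := by
    rw [tendsto_iff_dist_tendsto_zero]
    have hb : ∀ K : ℕ, dist (w K) (pl2 xb 0)
        ≤ 1/((K:ℝ)+1) + dist (pl2 (xk K) (yk K)) (pl2 xb 0) := fun K =>
      (dist_triangle (w K) (pl2 (xk K) (yk K)) (pl2 xb 0)).trans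
        (by linarith [le_of_lt (hwdist K)])
    refine squeeze_zero (fun K => dist_nonneg) hb ?_
    have := hone.add (tendsto_iff_dist_tendsto_zero.1 hzlim)
    simpa using this
  have hulim : Tendsto (fun K => fstW (u K)) atTop (𝓝 xs) := by
    rw [tendsto_iff_dist_tendsto_zero]
    have hb : ∀ K : ℕ, dist (fstW (u K)) xs ≤ 1/((K:ℝ)+1) + dist (xsk K) xs := fun K =>
      (dist_triangle (fstW (u K)) (xsk K) xs).trans
        (by linarith [le_of_lt (hudist K)])
    refine squeeze_zero (fun K => dist_nonneg) hb ?_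
    have := hone.add (tendsto_iff_dist_tendsto_zero.1 hxsk)
    simpa using this
  -- Step 3: pigeonhole on signatures
  set sig : WithLp 2 (EuclideanSpace ℝ (Fin n) × EuclideanSpace ℝ (Fin m)) →
      Finset (Fin p) × (∀ i : Fin p, Finset (Fin (kk i))) := fun z =>
    (Finset.univ.filter (fun i => z ∈ D i),
     fun i => Finset.univ.filter (fun j => ⟪aa i j, z⟫ = bb i j)) with hsigdef
  have hsigfreq : ∃ σ, ∃ᶠ K in atTop, sig (w K) = σ := by
    by_contra hcon
    push_neg at hcon
    have hev : ∀ σ, ∀ᶠ K in atTop, sig (w K) ≠ σ :=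
      fun σ => hcon σ
    obtain ⟨K, hK⟩ := (Filter.eventually_all.2 hev).exists
    exact hK (sig (w K)) rfl
  obtain ⟨σ, hσ⟩ := hsigfreq
  obtain ⟨φ, hφmono, hφ⟩ := extraction_of_frequently_atTop hσ
  -- Step 4: constant Fréchet cone along the subsequence
  set Cσ := ⋂ i ∈ σ.1, FGcone (fun j : {j // j ∈ σ.2 i} => aa i j.1) with hCσ
  have hfr : ∀ K, frechetNC (svGraph Φ) (w (φ K)) = Cσ := by
    intro K
    have hse := hφ K
    have h1 := congrArg Prod.fst hse
    have h2 := congrArg Prod.snd hse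
    have hS1 : ∀ i, i ∈ σ.1 ↔ w (φ K) ∈ D i := by
      intro i
      rw [← h1]
      simp [hsigdef, Finset.mem_filter]
    have hJ1 : ∀ i j, j ∈ σ.2 i ↔ ⟪aa i j, w (φ K)⟫ = bb i j := by
      intro i j
      rw [← h2]
      simp [hsigdef, Finset.mem_filter]
    rw [hgraph]
    exact frechet_formula aa bb D hD _ (hgraph ▸ hwA (φ K)) σ.1 σ.2 hS1 hJ1
  have hu_in : ∀ K, u (φ K) ∈ Cσ := fun K => (hfr K) ▸ hufre (φ K)
  -- Step 5: closed projection
  have hCσHP : IsHP Cσ :=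
    IsHP_biInter σ.1 (fun i => FGcone (fun j : {j // j ∈ σ.2 i} => aa i j.1))
      (fun i _ => FGcone_isHP _)
  have hTHP : IsHP {ξ : EuclideanSpace ℝ (Fin n) |
      ∃ μ : EuclideanSpace ℝ (Fin m), pl2 ξ μ ∈ Cσ} := proj_isHP hCσHP
  have hmemT : ∀ K, fstW (u (φ K)) ∈ {ξ : EuclideanSpace ℝ (Fin n) |
      ∃ μ : EuclideanSpace ℝ (Fin m), pl2 ξ μ ∈ Cσ} := by
    intro K
    refine ⟨(WithLp.equiv 2 _ (u (φ K))).2, ?_⟩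
    have heq : pl2 (fstW (u (φ K))) ((WithLp.equiv 2 _ (u (φ K))).2) = u (φ K) := rfl
    rw [heq]
    exact hu_in K
  have hxsT : xs ∈ {ξ : EuclideanSpace ℝ (Fin n) |
      ∃ μ : EuclideanSpace ℝ (Fin m), pl2 ξ μ ∈ Cσ} := by
    refine hTHP.isClosed.mem_of_tendsto (hulim.comp hφmono.tendsto_atTop) ?_
    exact Filter.Eventually.of_forall hmemT
  obtain ⟨μ, hμC⟩ := hxsT
  -- Step 6: conclude
  refine Set.mem_iUnion.2 ⟨-μ, ?_⟩
  show pl2 xs (-(-μ)) ∈ limitingNC (svGraph Φ) (pl2 xb 0)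
  rw [neg_neg]
  exact ⟨fun K => w (φ K), fun _ => pl2 xs μ, fun K => hwA (φ K),
    hwlim.comp hφmono.tendsto_atTop, fun K => (hfr K).symm ▸ hμC, tendsto_const_nhds⟩
end
end

section
/- Let Φ: ℝⁿ ⇒ ℝᵐ have closed graph and let x̄ ∈ M := {x | 0 ∈ Φ(x)}. Assume that for all sequences {x_k},{x*_k} ⊆ ℝⁿ and {y_k} ⊆ ℝᵐ with x_k → x̄, y_k → 0, x*_k → x* for some x* ∈ ℝⁿ, and x*_k ∈ 𝓜(x_k,y_k) for all k, there exists a bounded sequence {λ_k} ⊆ ℝᵐ with x*_k ∈ D*Φ(x_k,y_k)(λ_k) for all k. Then x̄ is AM-regular. -/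
open Filter Topology RealInnerProductSpace
open scoped ENNReal NNReal

noncomputable section

lemma limitingNC_closed {E : Type*} [NormedAddCommGroup E] [InnerProductSpace ℝ E]
    (A : Set E) (pk vk : ℕ → E) (p v : E)
    (hp : Tendsto pk atTop (𝓝 p)) (hv : Tendsto vk atTop (𝓝 v))
    (hm : ∀ k, vk k ∈ limitingNC A (pk k)) : v ∈ limitingNC A p := by
  have H : ∀ k : ℕ, ∃ q w : E, q ∈ A ∧ w ∈ frechetNC A q ∧
      dist q (pk k) < 1/(k+1) ∧ dist w (vk k) < 1/(k+1) := by
    intro k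
    obtain ⟨xj, vj, hA, hx, hF, hvj⟩ := hm k
    obtain ⟨N1, hN1⟩ := (Metric.tendsto_atTop.1 hx) (1/(k+1)) (by positivity)
    obtain ⟨N2, hN2⟩ := (Metric.tendsto_atTop.1 hvj) (1/(k+1)) (by positivity)
    exact ⟨xj (max N1 N2), vj (max N1 N2), hA _, hF _,
      hN1 _ (le_max_left _ _), hN2 _ (le_max_right _ _)⟩
  choose qk wk hqA hwF hq hw using H
  have hone : Tendsto (fun k : ℕ => 1/((k:ℝ)+1)) atTop (𝓝 0) :=
    tendsto_one_div_add_atTop_nhds_zero_nat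
  have key : ∀ (ak bk : ℕ → E) (a : E), Tendsto ak atTop (𝓝 a) →
      (∀ k, dist (bk k) (ak k) < 1/(k+1)) → Tendsto bk atTop (𝓝 a) := by
    intro ak bk a ha hd
    rw [tendsto_iff_dist_tendsto_zero]
    refine squeeze_zero (fun k => dist_nonneg)
      (fun k => (dist_triangle (bk k) (ak k) a).trans
        (add_le_add (hd k).le le_rfl)) ?_
    have := tendsto_iff_dist_tendsto_zero.1 ha
    simpa using hone.add this
  exact ⟨qk, wk, hqA, key pk qk p hp hq, hwF, key vk wk v hv hw⟩

lemma pl2_tendsto {E F : Type*} [NormedAddCommGroup E] [InnerProductSpace ℝ E]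
    [NormedAddCommGroup F] [InnerProductSpace ℝ F]
    (ak : ℕ → E) (bk : ℕ → F) (a : E) (b : F)
    (ha : Tendsto ak atTop (𝓝 a)) (hb : Tendsto bk atTop (𝓝 b)) :
    Tendsto (fun k => pl2 (ak k) (bk k)) atTop (𝓝 (pl2 a b)) := by
  have hc : Continuous (fun q : E × F => pl2 q.1 q.2) :=
    (WithLp.prodContinuousLinearEquiv 2 ℝ E F).symm.continuous
  exact (hc.tendsto (a, b)).comp (ha.prodMk_nhds hb)

theorem bounded_multiplier_selection_implies_AM_regular (n m : ℕ)
    (Φ : EuclideanSpace ℝ (Fin n) → Set (EuclideanSpace ℝ (Fin m)))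
    (hΦ : IsClosed (svGraph Φ))
    (xb : EuclideanSpace ℝ (Fin n)) (hfeas : 0 ∈ Φ xb)
    (h : ∀ (xk xsk : ℕ → EuclideanSpace ℝ (Fin n)) (yk : ℕ → EuclideanSpace ℝ (Fin m))
      (xs : EuclideanSpace ℝ (Fin n)),
      Tendsto xk atTop (𝓝 xb) → Tendsto yk atTop (𝓝 0) → Tendsto xsk atTop (𝓝 xs) →
      (∀ k, xsk k ∈ Mmap Φ (xk k) (yk k)) →
      ∃ lk : ℕ → EuclideanSpace ℝ (Fin m), (∃ Cb : ℝ, ∀ k, ‖lk k‖ ≤ Cb) ∧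
        ∀ k, xsk k ∈ coderiv Φ (xk k) (yk k) (lk k)) :
    AMregular Φ xb := by
  intro xs hxs
  obtain ⟨xk, xsk, yk, hxk, hyk, hxsk, hmem⟩ := hxs
  obtain ⟨lk, ⟨Cb, hCb⟩, hcod⟩ := h xk xsk yk xs hxk hyk hxsk hmem
  have hball : ∀ k, lk k ∈ Metric.closedBall (0 : EuclideanSpace ℝ (Fin m)) Cb := by
    intro k
    simpa [Metric.mem_closedBall, dist_zero_right] using hCb k
  obtain ⟨l, -, φ, hφ, hconv⟩ :=
    (isCompact_closedBall (0 : EuclideanSpace ℝ (Fin m)) Cb).tendsto_subseq hball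
  refine Set.mem_iUnion.2 ⟨l, ?_⟩
  refine limitingNC_closed (svGraph Φ)
    (fun k => pl2 (xk (φ k)) (yk (φ k)))
    (fun k => pl2 (xsk (φ k)) (-lk (φ k))) _ _ ?_ ?_ ?_
  · exact pl2_tendsto _ _ _ _ (hxk.comp hφ.tendsto_atTop) (hyk.comp hφ.tendsto_atTop)
  · exact pl2_tendsto _ _ _ _ (hxsk.comp hφ.tendsto_atTop) hconv.neg
  · exact fun k => hcod (φ k)
end
end

section
/- Let Φ: ℝⁿ ⇒ ℝᵐ have closed graph and let x̄ ∈ M := {x | 0 ∈ Φ(x)}. If ker D*Φ(x̄,0) = {0}, i.e., 0 ∈ D*Φ(x̄,0)(λ) implies λ = 0, then x̄ is AM-regular. -/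
open Filter Topology RealInnerProductSpace
open scoped ENNReal NNReal

noncomputable section

section AuxLemmas
variable {E : Type*} [NormedAddCommGroup E] [InnerProductSpace ℝ E]

lemma frechetNC_smul {A : Set E} {x v : E} {c : ℝ} (hc : 0 < c)
    (hv : v ∈ frechetNC A x) : c • v ∈ frechetNC A x := by
  obtain ⟨hxA, h⟩ := hv
  refine ⟨hxA, fun ε hε => ?_⟩
  obtain ⟨δ, hδ, hδ'⟩ := h (ε / c) (by positivity)
  refine ⟨δ, hδ, fun y hy hyx => ?_⟩
  have h1 := hδ' y hy hyx
  rw [real_inner_smul_left]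
  have h2 : c * ⟪v, y - x⟫ ≤ c * (ε / c * ‖y - x‖) :=
    mul_le_mul_of_nonneg_left h1 hc.le
  calc c * ⟪v, y - x⟫ ≤ c * (ε / c * ‖y - x‖) := h2
    _ = ε * ‖y - x‖ := by field_simp

lemma limitingNC_smul {A : Set E} {x v : E} {c : ℝ} (hc : 0 < c)
    (hv : v ∈ limitingNC A x) : c • v ∈ limitingNC A x := by
  obtain ⟨xk, vk, hA, hx, hF, hvv⟩ := hv
  exact ⟨xk, fun k => c • vk k, hA, hx, fun k => frechetNC_smul hc (hF k),
    hvv.const_smul c⟩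

lemma limitingNC_outer {A : Set E} {p v : E} {pk vk : ℕ → E}
    (hmem : ∀ k, vk k ∈ limitingNC A (pk k))
    (hp : Tendsto pk atTop (𝓝 p)) (hv : Tendsto vk atTop (𝓝 v)) :
    v ∈ limitingNC A p := by
  have H : ∀ k : ℕ, ∃ q u : E, q ∈ A ∧ u ∈ frechetNC A q ∧
      dist q (pk k) < 1 / (k + 1) ∧ dist u (vk k) < 1 / (k + 1) := by
    intro k
    obtain ⟨x, w, hxA, hx, hw, hwv⟩ := hmem k
    obtain ⟨N1, hN1⟩ := (Metric.tendsto_atTop.mp hx) (1 / (k + 1)) (by positivity)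
    obtain ⟨N2, hN2⟩ := (Metric.tendsto_atTop.mp hwv) (1 / (k + 1)) (by positivity)
    exact ⟨x (max N1 N2), w (max N1 N2), hxA _, hw _,
      hN1 _ (le_max_left _ _), hN2 _ (le_max_right _ _)⟩
  choose q u hqA hu hq hv' using H
  have hlim : Tendsto (fun k : ℕ => (1 : ℝ) / (k + 1)) atTop (𝓝 0) :=
    tendsto_one_div_add_atTop_nhds_zero_nat
  have hqp : Tendsto q atTop (𝓝 p) := by
    rw [tendsto_iff_dist_tendsto_zero]
    refine squeeze_zero (g := fun k : ℕ => 1 / (k + 1) + dist (pk k) p)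
      (fun k => dist_nonneg) (fun k => ?_) ?_
    · exact (dist_triangle (q k) (pk k) p).trans
        (add_le_add (hq k).le le_rfl)
    · have := hlim.add (tendsto_iff_dist_tendsto_zero.mp hp)
      simpa using this
  have hup : Tendsto u atTop (𝓝 v) := by
    rw [tendsto_iff_dist_tendsto_zero]
    refine squeeze_zero (g := fun k : ℕ => 1 / (k + 1) + dist (vk k) v)
      (fun k => dist_nonneg) (fun k => ?_) ?_
    · exact (dist_triangle (u k) (vk k) v).trans
        (add_le_add (hv' k).le le_rfl)
    · have := hlim.add (tendsto_iff_dist_tendsto_zero.mp hv)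
      simpa using this
  exact ⟨q, u, hqA, hqp, hu, hup⟩

end AuxLemmas

lemma pl2_smul {E F : Type*} [NormedAddCommGroup E] [InnerProductSpace ℝ E]
    [NormedAddCommGroup F] [InnerProductSpace ℝ F] (c : ℝ) (a : E) (b : F) :
    c • pl2 a b = pl2 (c • a) (c • b) := rfl


theorem coderivative_kernel_condition_implies_AM_regular (n m : ℕ)
    (Φ : EuclideanSpace ℝ (Fin n) → Set (EuclideanSpace ℝ (Fin m)))
    (hΦ : IsClosed (svGraph Φ))
    (xb : EuclideanSpace ℝ (Fin n)) (hfeas : 0 ∈ Φ xb)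
    (hker : ∀ l : EuclideanSpace ℝ (Fin m),
      (0 : EuclideanSpace ℝ (Fin n)) ∈ coderiv Φ xb 0 l → l = 0) :
    AMregular Φ xb := by
  let E := EuclideanSpace ℝ (Fin n)
  let F := EuclideanSpace ℝ (Fin m)
  rintro xs ⟨xk, xsk, yk, hxk, hyk, hxsk, hM⟩
  have hl : ∀ k, ∃ l : F, pl2 (xsk k) (-l) ∈ limitingNC (svGraph Φ) (pl2 (xk k) (yk k)) := by
    intro k
    have := hM k
    simpa [Mmap, coderiv, Set.mem_iUnion] using this
  choose l hlmem using hl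
  set t : ℕ → ℝ := fun k => (1 + ‖l k‖)⁻¹ with ht
  have htpos : ∀ k, 0 < t k := fun k => by positivity
  have htle : ∀ k, t k ≤ 1 := by
    intro k
    rw [ht]
    have h1 : (1 : ℝ) ≤ 1 + ‖l k‖ := by linarith [norm_nonneg (l k)]
    calc (1 + ‖l k‖)⁻¹ ≤ 1⁻¹ := by
            apply inv_anti₀ one_pos h1
      _ = 1 := inv_one
  set μ : ℕ → F := fun k => t k • l k with hμ
  have hμnorm : ∀ k, ‖μ k‖ = 1 - t k := by
    intro k
    have hne : (1 : ℝ) + ‖l k‖ ≠ 0 := by positivity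
    rw [hμ]
    simp only [norm_smul, Real.norm_eq_abs, abs_of_pos (htpos k), ht]
    field_simp
    rw [abs_of_pos (by positivity : (0:ℝ) < 1 / (1 + ‖l k‖)), mul_assoc, mul_one_div_cancel hne]
    ring
  have hscaled : ∀ k, pl2 (t k • xsk k) (-(μ k)) ∈
      limitingNC (svGraph Φ) (pl2 (xk k) (yk k)) := by
    intro k
    have h1 := limitingNC_smul (htpos k) (hlmem k)
    rw [pl2_smul] at h1
    rw [hμ, ← smul_neg]
    exact h1
  -- extract convergent subsequence of (t k, μ k)
  set w : ℕ → ℝ × F := fun k => (t k, μ k) with hw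
  have hwball : ∀ k, w k ∈ Metric.closedBall (0 : ℝ × F) 1 := by
    intro k
    rw [Metric.mem_closedBall, dist_zero_right]
    rw [Prod.norm_def]
    refine max_le ?_ ?_
    · rw [Real.norm_eq_abs, abs_of_pos (htpos k)]; exact htle k
    · rw [hμnorm k]; linarith [(htpos k)]
  obtain ⟨z, _, φ, hφ, hconv⟩ :=
    (isCompact_closedBall (0 : ℝ × F) 1).tendsto_subseq hwball
  obtain ⟨tl, μl⟩ := z
  have hφtop : Tendsto φ atTop atTop := hφ.tendsto_atTop
  have htl : Tendsto (fun k => t (φ k)) atTop (𝓝 tl) :=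
    (continuous_fst.tendsto _).comp hconv
  have hμl : Tendsto (fun k => μ (φ k)) atTop (𝓝 μl) :=
    (continuous_snd.tendsto _).comp hconv
  have htl0 : 0 ≤ tl :=
    ge_of_tendsto htl (Filter.Eventually.of_forall (fun k => (htpos (φ k)).le))
  have hμlnorm : ‖μl‖ = 1 - tl := by
    have h1 : Tendsto (fun k => ‖μ (φ k)‖) atTop (𝓝 ‖μl‖) := hμl.norm
    have h2 : Tendsto (fun k => ‖μ (φ k)‖) atTop (𝓝 (1 - tl)) := by
      have : (fun k => ‖μ (φ k)‖) = fun k => 1 - t (φ k) := by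
        funext k; exact hμnorm (φ k)
      rw [this]
      exact tendsto_const_nhds.sub htl
    exact tendsto_nhds_unique h1 h2
  -- pass to the limit
  have hp : Tendsto (fun k => pl2 (xk (φ k)) (yk (φ k))) atTop (𝓝 (pl2 xb 0)) := by
    have h1 : Tendsto (fun k => ((xk (φ k)), (yk (φ k)))) atTop (𝓝 (xb, 0)) :=
      (hxk.comp hφtop).prodMk_nhds (hyk.comp hφtop)
    exact (((WithLp.prodContinuousLinearEquiv 2 ℝ E F).symm.continuous.tendsto
      _).comp h1 : _)
  have hv : Tendsto (fun k => pl2 (t (φ k) • xsk (φ k)) (-(μ (φ k)))) atTop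
      (𝓝 (pl2 (tl • xs) (-μl))) := by
    have h1 : Tendsto (fun k => ((t (φ k) • xsk (φ k)), (-(μ (φ k))))) atTop
        (𝓝 (tl • xs, -μl)) :=
      (htl.smul (hxsk.comp hφtop)).prodMk_nhds hμl.neg
    exact (((WithLp.prodContinuousLinearEquiv 2 ℝ E F).symm.continuous.tendsto
      _).comp h1 : _)
  have hlim : pl2 (tl • xs) (-μl) ∈ limitingNC (svGraph Φ) (pl2 xb 0) :=
    limitingNC_outer (fun k => hscaled (φ k)) hp hv
  rcases eq_or_lt_of_le htl0 with h0 | hpos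
  · exfalso
    rw [← h0, zero_smul] at hlim
    have : μl = 0 := hker μl hlim
    rw [this, norm_zero] at hμlnorm
    rw [← h0] at hμlnorm
    norm_num at hμlnorm
  · have h1 := limitingNC_smul (inv_pos.mpr hpos) hlim
    rw [pl2_smul, smul_smul, inv_mul_cancel₀ hpos.ne', one_smul, smul_neg] at h1
    exact Set.mem_iUnion.mpr ⟨tl⁻¹ • μl, h1⟩
end
end

section
/- In the decoupled setting, let x̄ ∈ M be a local minimizer of f over M = {x ∈ C | 0 ∈ Γ(x)}, and assume Γ possesses the Aubin property at (x̄,0). Then x̄ is a dAM-stationary point: there exist sequences {x_k},{ε_k} ⊆ ℝⁿ and {ỹ_k},{λ̃_k} ⊆ ℝˡ with x_k → x̄, ε_k → 0, ỹ_k → 0 and ε_k ∈ ∂f(x_k) + D*Γ(x_k,ỹ_k)(λ̃_k) + N_C(x_k) for all k. -/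
open Filter Topology RealInnerProductSpace
open scoped ENNReal NNReal

noncomputable section

/-! ### Helper lemmas -/

section MyHelpers

variable {X : Type*} [NormedAddCommGroup X] [InnerProductSpace ℝ X]
variable {Y : Type*} [NormedAddCommGroup Y] [InnerProductSpace ℝ Y]

lemma my_expand_sq (u x₀ q : X) :
    ‖u - q‖^2 = ‖x₀ - q‖^2 + 2*⟪x₀ - q, u - x₀⟫ + ‖u - x₀‖^2 := by
  have h : u - q = (x₀ - q) + (u - x₀) := by abel
  rw [h, norm_add_sq_real]

lemma pl2_fst (x : X) (y : Y) : (pl2 x y).fst = x := rfl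
lemma pl2_snd (x : X) (y : Y) : (pl2 x y).snd = y := rfl
lemma pl2_sub (a : X) (b : Y) (c : X) (d : Y) : pl2 a b - pl2 c d = pl2 (a-c) (b-d) := rfl
lemma pl2_smul_s15 (s : ℝ) (a : X) (b : Y) : s • pl2 a b = pl2 (s • a) (s • b) := rfl
lemma pl2_eta (p : WithLp 2 (X × Y)) : pl2 p.fst p.snd = p := rfl

lemma norm_pl2_sq (x : X) (y : Y) : ‖pl2 x y‖^2 = ‖x‖^2 + ‖y‖^2 :=
  WithLp.prod_norm_sq_eq_of_L2 _

lemma inner_pl2 (a x : X) (b y : Y) : ⟪pl2 a b, pl2 x y⟫ = ⟪a,x⟫ + ⟪b,y⟫ := rfl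

lemma my_sq_le (a b : ℝ) (ha : 0 ≤ a) (hb : 0 ≤ b) (h : a^2 ≤ b^2) : a ≤ b := by
  nlinarith

lemma pl2_fst_norm_le (x : X) (y : Y) : ‖x‖ ≤ ‖pl2 x y‖ := by
  have h := norm_pl2_sq x y
  have := norm_nonneg (pl2 x y)
  nlinarith [sq_nonneg ‖y‖, norm_nonneg x]

lemma pl2_snd_norm_le (x : X) (y : Y) : ‖y‖ ≤ ‖pl2 x y‖ := by
  have h := norm_pl2_sq x y
  have := norm_nonneg (pl2 x y)
  nlinarith [sq_nonneg ‖x‖, norm_nonneg y]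

lemma frechetNC_of_dist_min {A : Set X} {z q : X} (hz : z ∈ A) {δ₀ : ℝ} (hδ₀ : 0 < δ₀)
    (hmin : ∀ p ∈ A, ‖p - z‖ < δ₀ → ‖q - z‖ ≤ ‖q - p‖) {s : ℝ} (hs : 0 ≤ s) :
    s • (q - z) ∈ frechetNC A z := by
  refine ⟨hz, fun ε hε => ⟨min δ₀ (2*ε/(s+1)), by positivity, fun p hp hlt => ?_⟩⟩
  have h1 : ‖q - z‖ ≤ ‖q - p‖ := hmin p hp (lt_of_lt_of_le hlt (min_le_left _ _))
  have h2 : ‖p - z‖ * (s+1) < 2*ε := by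
    have h2' : ‖p - z‖ < 2*ε/(s+1) := lt_of_lt_of_le hlt (min_le_right _ _)
    exact (lt_div_iff₀ (by positivity)).mp h2'
  have e1 : ‖p - q‖^2 = ‖z - q‖^2 + 2*⟪z - q, p - z⟫ + ‖p - z‖^2 := my_expand_sq p z q
  have hsq : ‖q - z‖^2 ≤ ‖q - p‖^2 := by nlinarith [norm_nonneg (q - z), norm_nonneg (q - p)]
  rw [norm_sub_rev q z, norm_sub_rev q p] at hsq
  have e4 : ⟪q - z, p - z⟫ = -⟪z - q, p - z⟫ := by
    rw [show q - z = -(z - q) by abel, inner_neg_left]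
  have key : ⟪q - z, p - z⟫ ≤ ‖p - z‖^2/2 := by
    rw [e4]; nlinarith [e1, hsq]
  rw [real_inner_smul_left]
  nlinarith [mul_le_mul_of_nonneg_left key hs, norm_nonneg (p - z),
    mul_le_mul_of_nonneg_left h2.le (norm_nonneg (p - z)), hε.le,
    mul_nonneg hs (norm_nonneg (p - z))]

end MyHelpers

section MyHelpers2

variable {X : Type*} [NormedAddCommGroup X] [InnerProductSpace ℝ X]
variable {Y : Type*} [NormedAddCommGroup Y] [InnerProductSpace ℝ Y]

/-- The epigraph-type set used in `limSubdiff`. -/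
lemma frechet_subgrad_of_quad {f : X → ℝ} {x₀ a : X} {T δ₀ : ℝ} (hT : 0 ≤ T) (hδ₀ : 0 < δ₀)
    (h : ∀ u, ‖u - x₀‖ < δ₀ → f x₀ + ⟪a, u - x₀⟫ - T * ‖u - x₀‖^2 ≤ f u) :
    pl2 a (-1 : ℝ) ∈ frechetNC
      {p : WithLp 2 (X × ℝ) | f (WithLp.equiv 2 (X × ℝ) p).1 ≤ (WithLp.equiv 2 (X × ℝ) p).2}
      (pl2 x₀ (f x₀)) := by
  refine ⟨by simp [pl2], fun ε hε => ⟨min δ₀ (ε/(T+1)), by positivity, fun p hp hlt => ?_⟩⟩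
  set u : X := p.fst with hu
  set α : ℝ := p.snd with hα
  have hpu : f u ≤ α := hp
  have hsub : p - pl2 x₀ (f x₀) = pl2 (u - x₀) (α - f x₀) := by
    rw [← pl2_eta p, pl2_sub]
  have hcomp : ‖u - x₀‖ ≤ ‖p - pl2 x₀ (f x₀)‖ := by
    rw [hsub]; exact pl2_fst_norm_le _ _
  have hlt' : ‖u - x₀‖ < δ₀ :=
    lt_of_le_of_lt hcomp (lt_of_lt_of_le hlt (min_le_left _ _))
  have hf := h u hlt'
  have hinner : ⟪pl2 a (-1:ℝ), p - pl2 x₀ (f x₀)⟫ = ⟪a, u - x₀⟫ + (-1) * (α - f x₀) := by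
    rw [hsub, inner_pl2]; norm_num [real_inner_comm]
  rw [hinner]
  have hnn : ‖u - x₀‖ ≤ ‖p - pl2 x₀ (f x₀)‖ := hcomp
  have hb : ‖p - pl2 x₀ (f x₀)‖ < ε/(T+1) := lt_of_lt_of_le hlt (min_le_right _ _)
  have key : ⟪a, u - x₀⟫ - (α - f x₀) ≤ T * ‖u - x₀‖^2 := by linarith
  have : T * ‖u - x₀‖^2 ≤ ε * ‖p - pl2 x₀ (f x₀)‖ := by
    have h1 : T * ‖u - x₀‖^2 ≤ T * (‖p - pl2 x₀ (f x₀)‖ * ‖u - x₀‖) := by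
      have := mul_le_mul_of_nonneg_left hnn (norm_nonneg (u - x₀))
      nlinarith [norm_nonneg (u-x₀)]
    have h2 : ‖p - pl2 x₀ (f x₀)‖ * (T+1) < ε := (lt_div_iff₀ (by positivity)).mp hb
    nlinarith [norm_nonneg (u - x₀), norm_nonneg (p - pl2 x₀ (f x₀)),
      mul_le_mul_of_nonneg_left h2.le (norm_nonneg (u - x₀))]
  linarith

lemma norm_subgrad_le_of_quad {f : X → ℝ} {x₀ a : X} {T δ₀ L : ℝ} (hT : 0 ≤ T) (hδ₀ : 0 < δ₀)
    (hL : 0 ≤ L)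
    (hLip : ∀ u, ‖u - x₀‖ < δ₀ → f u - f x₀ ≤ L * ‖u - x₀‖)
    (h : ∀ u, ‖u - x₀‖ < δ₀ → f x₀ + ⟪a, u - x₀⟫ - T * ‖u - x₀‖^2 ≤ f u) :
    ‖a‖ ≤ L := by
  by_contra hc
  push_neg at hc
  have ha : 0 < ‖a‖ := lt_of_le_of_lt hL hc
  set s : ℝ := min (δ₀/(2*(‖a‖+1))) ((‖a‖ - L)/((T+1)*(‖a‖+1))) with hs
  have hspos : 0 < s := by
    apply lt_min <;> [positivity; (apply div_pos (by linarith) (by positivity))]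
  have hsmall : s * ‖a‖ < δ₀ := by
    have h1 : s ≤ δ₀/(2*(‖a‖+1)) := min_le_left _ _
    have : s * ‖a‖ ≤ δ₀/(2*(‖a‖+1)) * ‖a‖ := mul_le_mul_of_nonneg_right h1 (norm_nonneg a)
    have h2 : δ₀/(2*(‖a‖+1)) * ‖a‖ < δ₀ := by
      rw [div_mul_eq_mul_div, div_lt_iff₀ (by positivity)]
      nlinarith
    linarith
  set u : X := x₀ + s • a with hu
  have hun : ‖u - x₀‖ = s * ‖a‖ := by
    simp [hu, norm_smul, abs_of_pos hspos]
  have h1 := h u (by rw [hun]; exact hsmall)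
  have h2 := hLip u (by rw [hun]; exact hsmall)
  have hiu : ⟪a, u - x₀⟫ = s * ‖a‖^2 := by
    simp [hu, real_inner_smul_right, real_inner_self_eq_norm_sq, mul_comm]
  rw [hiu, hun] at h1
  rw [hun] at h2
  -- s‖a‖² ≤ L s‖a‖ + T s²‖a‖² ⇒ ‖a‖ ≤ L + T s ‖a‖
  have hTs : (T+1) * s * ‖a‖ < ‖a‖ - L := by
    have h3 : s ≤ (‖a‖ - L)/((T+1)*(‖a‖+1)) := min_le_right _ _
    have h4 : s * ((T+1)*(‖a‖+1)) ≤ ‖a‖ - L := by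
      rw [← le_div_iff₀ (by positivity)]; exact h3
    nlinarith [hspos]
  nlinarith [hspos, sq_nonneg s, mul_pos hspos ha]

end MyHelpers2

section MyHelpers3

variable {E : Type*} [NormedAddCommGroup E] [InnerProductSpace ℝ E]
variable {F : Type*} [NormedAddCommGroup F] [InnerProductSpace ℝ F]

lemma aubin_frechet_norm_bound {Γ : E → Set F} {g : E} {w : F}
    {β : E} {μ : F} {κ r : ℝ} (hκ : 0 ≤ κ) (hr : 0 < r)
    (haub : ∀ x' : E, ‖x' - g‖ < r → ∃ z ∈ Γ x', ‖w - z‖ ≤ κ * ‖g - x'‖)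
    (hn : pl2 β μ ∈ frechetNC (svGraph Γ) (pl2 g w)) : ‖β‖ ≤ κ * ‖μ‖ := by
  rcases eq_or_ne β 0 with h0 | h0
  · rw [h0, norm_zero]; positivity
  have hβ : 0 < ‖β‖ := norm_pos_iff.mpr h0
  set c : ℝ := Real.sqrt (1 + κ^2) with hc
  have hcsq : c^2 = 1 + κ^2 := Real.sq_sqrt (by positivity)
  have hcnn : 0 ≤ c := Real.sqrt_nonneg _
  have hc1 : 1 ≤ c := by nlinarith [sq_nonneg κ]
  have hc0 : 0 < c := lt_of_lt_of_le one_pos hc1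
  have key : ∀ ε > 0, ‖β‖ ≤ κ * ‖μ‖ + ε * c := by
    intro ε hε
    obtain ⟨δ, hδ, hineq⟩ := hn.2 ε hε
    set s : ℝ := min (r/(2*‖β‖)) (δ/(2*‖β‖*c)) with hs
    have hspos : 0 < s := lt_min (by positivity) (by positivity)
    set x' : E := g + s • β with hx'
    have hxg : ‖x' - g‖ = s * ‖β‖ := by
      simp [hx', norm_smul, abs_of_pos hspos]
    have hgx : ‖g - x'‖ = s * ‖β‖ := by rw [norm_sub_rev]; exact hxg
    have hxr : ‖x' - g‖ < r := by
      rw [hxg]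
      have h1 : s * (2*‖β‖) ≤ r := (le_div_iff₀ (by positivity)).mp (min_le_left _ _)
      nlinarith [mul_pos hspos hβ]
    obtain ⟨z, hz, hwz⟩ := haub x' hxr
    rw [hgx] at hwz
    have hmem : pl2 x' z ∈ svGraph Γ := hz
    have hsub : pl2 x' z - pl2 g w = pl2 (s • β) (z - w) := by
      rw [pl2_sub]; congr 1; rw [hx']; abel
    have hzw : ‖z - w‖ ≤ κ * (s * ‖β‖) := by rw [norm_sub_rev]; exact hwz
    have hnorm : ‖pl2 x' z - pl2 g w‖ ≤ s * ‖β‖ * c := by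
      rw [hsub]
      apply my_sq_le _ _ (norm_nonneg _) (by positivity)
      rw [norm_pl2_sq, norm_smul, Real.norm_eq_abs, abs_of_pos hspos]
      nlinarith [pow_le_pow_left₀ (norm_nonneg (z-w)) hzw 2, mul_pos hspos hβ]
    have hlt : ‖pl2 x' z - pl2 g w‖ < δ := by
      have h2 : s * (2*‖β‖*c) ≤ δ := (le_div_iff₀ (by positivity)).mp (min_le_right _ _)
      nlinarith [hnorm, mul_pos (mul_pos hspos hβ) hc0]
    have happ := hineq _ hmem hlt
    rw [hsub, inner_pl2, real_inner_smul_right, real_inner_self_eq_norm_sq] at happ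
    have hlow : -(‖μ‖ * (κ * (s * ‖β‖))) ≤ ⟪μ, z - w⟫ := by
      have h3 := abs_real_inner_le_norm μ (z - w)
      have h4 : ‖μ‖ * ‖z - w‖ ≤ ‖μ‖ * (κ * (s * ‖β‖)) :=
        mul_le_mul_of_nonneg_left hzw (norm_nonneg μ)
      have h5 := neg_abs_le ⟪μ, z - w⟫
      linarith
    have hup : ε * ‖pl2 (s • β) (z - w)‖ ≤ ε * (s * ‖β‖ * c) := by
      rw [← hsub]; exact mul_le_mul_of_nonneg_left hnorm hε.le
    have hfin : s * ‖β‖^2 ≤ κ * ‖μ‖ * (s * ‖β‖) + ε * (s * ‖β‖ * c) := by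
      nlinarith [happ, hlow, hup]
    by_contra hcon
    push_neg at hcon
    have hdiv : 0 < s * ‖β‖ := mul_pos hspos hβ
    have := mul_lt_mul_of_pos_left hcon hdiv
    nlinarith
  apply le_of_forall_pos_le_add
  intro ε hε
  have h6 : ‖β‖ ≤ κ * ‖μ‖ + (ε/c) * c := key (ε/c) (by positivity)
  rw [div_mul_cancel₀ _ (ne_of_gt hc0)] at h6
  linarith

end MyHelpers3

section MyHelpers4

variable {X : Type*} [NormedAddCommGroup X] [InnerProductSpace ℝ X]

/-- From minimality of `f` plus four quadratics, a quadratic lower bound for `f`. -/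
lemma quad_lower_bound (f : X → ℝ) (x₀ q₁ q₂ q₃ q₄ : X) {w₃ : ℝ} (hw₃ : 0 ≤ w₃) {δ₀ : ℝ}
    (hmin : ∀ u, ‖u - x₀‖ < δ₀ →
      f x₀ + ‖x₀ - q₁‖^2 + ‖x₀ - q₂‖^2 + w₃*(‖x₀ - q₃‖^2 + ‖x₀ - q₄‖^2) ≤
      f u + ‖u - q₁‖^2 + ‖u - q₂‖^2 + w₃*(‖u - q₃‖^2 + ‖u - q₄‖^2)) :
    ∀ u, ‖u - x₀‖ < δ₀ →
      f x₀ + ⟪(2:ℝ)•(q₁-x₀) + (2:ℝ)•(q₂-x₀) + (2*w₃)•(q₃-x₀) + (2*w₃)•(q₄-x₀), u - x₀⟫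
        - (2+2*w₃)*‖u - x₀‖^2 ≤ f u := by
  intro u hu
  have h := hmin u hu
  have e1 := my_expand_sq u x₀ q₁
  have e2 := my_expand_sq u x₀ q₂
  have e3 : w₃*‖u - q₃‖^2 = w₃*(‖x₀ - q₃‖^2 + 2*⟪x₀ - q₃, u - x₀⟫ + ‖u - x₀‖^2) := by
    rw [my_expand_sq u x₀ q₃]
  have e4 : w₃*‖u - q₄‖^2 = w₃*(‖x₀ - q₄‖^2 + 2*⟪x₀ - q₄, u - x₀⟫ + ‖u - x₀‖^2) := by
    rw [my_expand_sq u x₀ q₄]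
  have hneg : (2:ℝ)•(q₁-x₀) + (2:ℝ)•(q₂-x₀) + (2*w₃)•(q₃-x₀) + (2*w₃)•(q₄-x₀)
      = -((2:ℝ)•(x₀-q₁) + (2:ℝ)•(x₀-q₂) + (2*w₃)•(x₀-q₃) + (2*w₃)•(x₀-q₄)) := by
    module
  have hin : ⟪(2:ℝ)•(q₁-x₀) + (2:ℝ)•(q₂-x₀) + (2*w₃)•(q₃-x₀) + (2*w₃)•(q₄-x₀), u - x₀⟫
      = -(2*⟪x₀-q₁, u-x₀⟫ + 2*⟪x₀-q₂, u-x₀⟫ + (2*w₃)*⟪x₀-q₃, u-x₀⟫ + (2*w₃)*⟪x₀-q₄, u-x₀⟫) := by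
    rw [hneg, inner_neg_left, inner_add_left, inner_add_left, inner_add_left,
      real_inner_smul_left, real_inner_smul_left, real_inner_smul_left, real_inner_smul_left]
  rw [hin]
  nlinarith [h, e1, e2, e3, e4, mul_nonneg hw₃ (sq_nonneg ‖u - x₀‖)]

/-- Uniqueness of the minimizer of a strongly convex quadratic. -/
lemma quad_min_unique {A : ℝ} (hA : 0 < A) {u₀ y m : X} (hm : A • m = u₀)
    (h : A*‖y‖^2 - 2*⟪y,u₀⟫ ≤ A*‖m‖^2 - 2*⟪m,u₀⟫) : y = m := by
  have h1 : ⟪y, u₀⟫ = A * ⟪y, m⟫ := by rw [← hm, real_inner_smul_right]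
  have h2 : ⟪m, u₀⟫ = A * ‖m‖^2 := by
    rw [← hm, real_inner_smul_right, real_inner_self_eq_norm_sq]
  have h3 : ‖y - m‖^2 = ‖y‖^2 - 2*⟪y,m⟫ + ‖m‖^2 := norm_sub_sq_real y m
  have h4 : A * ‖y - m‖^2 ≤ 0 := by
    rw [h3]; rw [h1, h2] at h; ring_nf; ring_nf at h; linarith
  have h5 : ‖y - m‖^2 ≤ 0 := by nlinarith [h4]
  have : ‖y - m‖ = 0 := by nlinarith [norm_nonneg (y - m)]
  rwa [norm_eq_zero, sub_eq_zero] at this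

end MyHelpers4

section InnerLemma

set_option maxHeartbeats 4000000 in
lemma inner_stationarity
    {E F : Type*} [NormedAddCommGroup E] [InnerProductSpace ℝ E] [FiniteDimensional ℝ E]
    [NormedAddCommGroup F] [InnerProductSpace ℝ F] [FiniteDimensional ℝ F]
    (f : E → ℝ) (hfc : Continuous f)
    (Γ : E → Set F) (hΓ : IsClosed (svGraph Γ))
    (C : Set E) (hCcl : IsClosed C)
    (xb : E) (R L κ : ℝ) (hR : 0 < R) (hL : 0 ≤ L) (hκ : 0 ≤ κ)
    (hLip : ∀ u v : E, ‖u - xb‖ ≤ R → ‖v - xb‖ ≤ R → f u - f v ≤ L * ‖u - v‖)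
    (hAub : ∀ g : E, ∀ w : F, ∀ x' : E, ‖g - xb‖ ≤ R → ‖x' - xb‖ ≤ 2*R → w ∈ Γ g → ‖w‖ ≤ R →
        ∃ z ∈ Γ x', ‖w - z‖ ≤ κ * ‖g - x'‖)
    (k : ℕ) (xk : E) (yk : F) (hxkC : xk ∈ C) (hykΓ : yk ∈ Γ xk)
    (hxkR : ‖xk - xb‖ < R) (hykR : ‖yk‖ < R)
    (hmink : ∀ x ∈ C, ∀ y ∈ Γ x, ‖x - xb‖ ≤ R → ‖y‖ ≤ R →
        f xk + (k:ℝ)*‖yk‖^2 + ‖xk - xb‖^2 ≤ f x + (k:ℝ)*‖y‖^2 + ‖x - xb‖^2) :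
    ∃ lam : F, ∃ a ∈ limSubdiff f xk, ∃ b ∈ coderiv Γ xk yk lam, ∃ c ∈ limitingNC C xk,
      a + b + c = (2:ℝ) • (xb - xk) := by
  classical
  -- the ℓ² product space
  set G := WithLp 2 (E × F) with hGdef
  have hGfst : Continuous (fun p : G => p.fst) :=
    continuous_fst.comp (WithLp.prodContinuousLinearEquiv 2 ℝ E F).continuous
  have hGsnd : Continuous (fun p : G => p.snd) :=
    continuous_snd.comp (WithLp.prodContinuousLinearEquiv 2 ℝ E F).continuous
  -- the feasible set of the inner penalized problem
  set S : Set ((E × F) × (E × G)) :=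
    {z | ‖z.1.1 - xb‖ ≤ R ∧ ‖z.1.2‖ ≤ R ∧ z.2.1 ∈ C ∧ ‖z.2.1 - xb‖ ≤ R ∧
      z.2.2 ∈ svGraph Γ ∧ ‖(z.2.2).fst - xb‖ ≤ R ∧ ‖(z.2.2).snd‖ ≤ R} with hSdef
  have hz₀S : ((xk, yk), (xk, pl2 xk yk)) ∈ S := by
    refine ⟨hxkR.le, hykR.le, hxkC, hxkR.le, hykΓ, hxkR.le, hykR.le⟩
  -- compactness of S
  have hScl : IsClosed S := by
    apply IsClosed.inter
    · exact isClosed_le ((continuous_fst.comp continuous_fst).sub continuous_const).norm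
        continuous_const
    apply IsClosed.inter
    · exact isClosed_le (continuous_snd.comp continuous_fst).norm continuous_const
    apply IsClosed.inter
    · exact hCcl.preimage (continuous_fst.comp continuous_snd)
    apply IsClosed.inter
    · exact isClosed_le ((continuous_fst.comp continuous_snd).sub continuous_const).norm
        continuous_const
    apply IsClosed.inter
    · exact hΓ.preimage (continuous_snd.comp continuous_snd)
    apply IsClosed.inter
    · exact isClosed_le
        (((hGfst.comp (continuous_snd.comp continuous_snd)).sub continuous_const).norm)
        continuous_const
    · exact isClosed_le ((hGsnd.comp (continuous_snd.comp continuous_snd)).norm) continuous_const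
  have hSsub : S ⊆ (Metric.closedBall xb R ×ˢ Metric.closedBall (0:F) R) ×ˢ
      (Metric.closedBall xb R ×ˢ Metric.closedBall (pl2 xb 0) (2*R)) := by
    rintro z ⟨h1, h2, _, h4, _, h6, h7⟩
    refine ⟨⟨?_, ?_⟩, ?_, ?_⟩
    · simpa [Metric.mem_closedBall, dist_eq_norm] using h1
    · simpa [Metric.mem_closedBall, dist_eq_norm] using h2
    · simpa [Metric.mem_closedBall, dist_eq_norm] using h4
    · rw [Metric.mem_closedBall, dist_eq_norm]
      have hsub : z.2.2 - pl2 xb 0 = pl2 ((z.2.2).fst - xb) ((z.2.2).snd - 0) := rfl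
      rw [hsub]
      apply my_sq_le _ _ (norm_nonneg _) (by positivity)
      rw [norm_pl2_sq, sub_zero]
      linarith [pow_le_pow_left₀ (norm_nonneg ((z.2.2).fst - xb)) h6 2,
        pow_le_pow_left₀ (norm_nonneg (z.2.2).snd) h7 2, sq_nonneg R]
  have hScomp : IsCompact S := by
    apply IsCompact.of_isClosed_subset _ hScl hSsub
    exact ((isCompact_closedBall _ _).prod (isCompact_closedBall _ _)).prod
      ((isCompact_closedBall _ _).prod (isCompact_closedBall _ _))
  -- the penalized objective
  set Φ : ℕ → ((E × F) × (E × G)) → ℝ := fun t z =>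
    f z.1.1 + (k:ℝ)*‖z.1.2‖^2 + ‖z.1.1 - xb‖^2 + ‖z.1.1 - xk‖^2 + ‖z.1.2 - yk‖^2
      + ((t:ℝ)+1)*(‖z.1.1 - z.2.1‖^2 + ‖z.1.1 - (z.2.2).fst‖^2 + ‖z.1.2 - (z.2.2).snd‖^2)
    with hΦdef
  have hΦc : ∀ t : ℕ, Continuous (Φ t) := by
    intro t
    have hx : Continuous (fun z : (E × F) × (E × G) => z.1.1) :=
      continuous_fst.comp continuous_fst
    have hy : Continuous (fun z : (E × F) × (E × G) => z.1.2) :=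
      continuous_snd.comp continuous_fst
    have hcc : Continuous (fun z : (E × F) × (E × G) => z.2.1) :=
      continuous_fst.comp continuous_snd
    have hpf : Continuous (fun z : (E × F) × (E × G) => (z.2.2).fst) :=
      hGfst.comp (continuous_snd.comp continuous_snd)
    have hps : Continuous (fun z : (E × F) × (E × G) => (z.2.2).snd) :=
      hGsnd.comp (continuous_snd.comp continuous_snd)
    exact (((((hfc.comp hx).add ((continuous_const.mul (hy.norm.pow 2)))).add
      (((hx.sub continuous_const).norm.pow 2))).add
      (((hx.sub continuous_const).norm.pow 2))).add
      (((hy.sub continuous_const).norm.pow 2))).add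
      (continuous_const.mul ((((hx.sub hcc).norm.pow 2).add
        (((hx.sub hpf).norm.pow 2))).add (((hy.sub hps).norm.pow 2))))
  -- minimizers of the inner problems
  have hEx : ∀ t : ℕ, ∃ z ∈ S, IsMinOn (Φ t) S z := fun t =>
    hScomp.exists_isMinOn ⟨_, hz₀S⟩ (hΦc t).continuousOn
  choose Zt hZS hZmin using hEx
  set X : ℕ → E := fun t => (Zt t).1.1 with hXdef
  set Y : ℕ → F := fun t => (Zt t).1.2 with hYdef
  set Cc : ℕ → E := fun t => (Zt t).2.1 with hCcdef
  set Pt : ℕ → G := fun t => (Zt t).2.2 with hPtdef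
  set Pf : ℕ → E := fun t => (Pt t).fst with hPfdef
  set Ps : ℕ → F := fun t => (Pt t).snd with hPsdef
  set V₀ : ℝ := f xk + (k:ℝ)*‖yk‖^2 + ‖xk - xb‖^2 with hV₀def
  have hval : ∀ t, Φ t (Zt t) ≤ V₀ := by
    intro t
    have := isMinOn_iff.mp (hZmin t) _ hz₀S
    simpa [hΦdef, pl2_fst, pl2_snd, hV₀def] using this
  have hXR : ∀ t, ‖X t - xb‖ ≤ R := fun t => (hZS t).1
  have hYR : ∀ t, ‖Y t‖ ≤ R := fun t => (hZS t).2.1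
  have hCcC : ∀ t, Cc t ∈ C := fun t => (hZS t).2.2.1
  have hCcR : ∀ t, ‖Cc t - xb‖ ≤ R := fun t => (hZS t).2.2.2.1
  have hPtΓ : ∀ t, Pt t ∈ svGraph Γ := fun t => (hZS t).2.2.2.2.1
  have hPfR : ∀ t, ‖Pf t - xb‖ ≤ R := fun t => (hZS t).2.2.2.2.2.1
  have hPsR : ∀ t, ‖Ps t‖ ≤ R := fun t => (hZS t).2.2.2.2.2.2
  have hflow : ∀ t, f xk - L*(2*R) ≤ f (X t) := by
    intro t
    have h1 := hLip xk (X t) hxkR.le (hXR t)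
    have h2 : ‖xk - X t‖ ≤ 2*R := by
      have tri : ‖xk - X t‖ ≤ ‖xk - xb‖ + ‖xb - X t‖ := by
        simpa [dist_eq_norm] using dist_triangle xk xb (X t)
      have := norm_sub_rev xb (X t)
      have := hXR t
      rw [norm_sub_rev xb (X t)] at tri
      linarith
    linarith [h1, mul_le_mul_of_nonneg_left h2 hL]
  set B : ℝ := L*(2*R) + (k:ℝ)*‖yk‖^2 + ‖xk - xb‖^2 with hBdef
  have hgap : ∀ t : ℕ, ((t:ℝ)+1)*(‖X t - Cc t‖^2 + ‖X t - Pf t‖^2 + ‖Y t - Ps t‖^2) ≤ B := by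
    intro t
    have h1 := hval t
    have h2 := hflow t
    have : Φ t (Zt t) = f (X t) + (k:ℝ)*‖Y t‖^2 + ‖X t - xb‖^2 + ‖X t - xk‖^2 + ‖Y t - yk‖^2
        + ((t:ℝ)+1)*(‖X t - Cc t‖^2 + ‖X t - Pf t‖^2 + ‖Y t - Ps t‖^2) := rfl
    rw [this] at h1
    rw [hV₀def] at h1
    rw [hBdef]
    linarith [h1, h2, mul_nonneg (Nat.cast_nonneg k : (0:ℝ) ≤ k) (sq_nonneg ‖Y t‖),
      sq_nonneg ‖X t - xb‖, sq_nonneg ‖X t - xk‖, sq_nonneg ‖Y t - yk‖]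
  -- convergence of the inner minimizers
  set z₀ : (E × F) × (E × G) := ((xk, yk), (xk, pl2 xk yk)) with hz₀def
  set ψ : ((E × F) × (E × G)) → ℝ := fun z =>
    f z.1.1 + (k:ℝ)*‖z.1.2‖^2 + ‖z.1.1 - xb‖^2 + ‖z.1.1 - xk‖^2 + ‖z.1.2 - yk‖^2 with hψdef
  have hψc : Continuous ψ := by
    have hx : Continuous (fun z : (E × F) × (E × G) => z.1.1) :=
      continuous_fst.comp continuous_fst
    have hy : Continuous (fun z : (E × F) × (E × G) => z.1.2) :=
      continuous_snd.comp continuous_fst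
    exact ((((hfc.comp hx).add ((continuous_const.mul (hy.norm.pow 2)))).add
      (((hx.sub continuous_const).norm.pow 2))).add
      (((hx.sub continuous_const).norm.pow 2))).add
      (((hy.sub continuous_const).norm.pow 2))
  have hψle : ∀ t : ℕ, ψ (Zt t) ≤ V₀ := by
    intro t
    have h1 := hval t
    have h2 : Φ t (Zt t) = ψ (Zt t)
        + ((t:ℝ)+1)*(‖X t - Cc t‖^2 + ‖X t - Pf t‖^2 + ‖Y t - Ps t‖^2) := rfl
    have h3 : (0:ℝ) ≤ ((t:ℝ)+1)*(‖X t - Cc t‖^2 + ‖X t - Pf t‖^2 + ‖Y t - Ps t‖^2) := by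
      have := (Nat.cast_nonneg t : (0:ℝ) ≤ t)
      have h4 : (0:ℝ) ≤ ‖X t - Cc t‖^2 + ‖X t - Pf t‖^2 + ‖Y t - Ps t‖^2 := by
        linarith [sq_nonneg ‖X t - Cc t‖, sq_nonneg ‖X t - Pf t‖, sq_nonneg ‖Y t - Ps t‖]
      nlinarith
    linarith [h1, h2, h3]
  have hZlim : Tendsto Zt atTop (𝓝 z₀) := by
    apply tendsto_of_subseq_tendsto
    intro ns hns
    obtain ⟨w, hwS, ms, hms, hconv⟩ := hScomp.tendsto_subseq (fun j => hZS (ns j))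
    refine ⟨ms, ?_⟩
    set τ : ℕ → ℕ := fun j => ns (ms j) with hτdef
    have hτ : Tendsto τ atTop atTop := hns.comp hms.tendsto_atTop
    have hxw : Tendsto (fun j => X (τ j)) atTop (𝓝 w.1.1) :=
      ((continuous_fst.comp continuous_fst).tendsto w).comp hconv
    have hyw : Tendsto (fun j => Y (τ j)) atTop (𝓝 w.1.2) :=
      ((continuous_snd.comp continuous_fst).tendsto w).comp hconv
    have hcw : Tendsto (fun j => Cc (τ j)) atTop (𝓝 w.2.1) :=
      ((continuous_fst.comp continuous_snd).tendsto w).comp hconv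
    have hpw : Tendsto (fun j => Pt (τ j)) atTop (𝓝 w.2.2) :=
      ((continuous_snd.comp continuous_snd).tendsto w).comp hconv
    have hpfw : Tendsto (fun j => Pf (τ j)) atTop (𝓝 (w.2.2).fst) := (hGfst.tendsto _).comp hpw
    have hpsw : Tendsto (fun j => Ps (τ j)) atTop (𝓝 (w.2.2).snd) := (hGsnd.tendsto _).comp hpw
    have hBlim : Tendsto (fun j => B / ((τ j : ℝ)+1)) atTop (𝓝 0) :=
      Filter.Tendsto.div_atTop tendsto_const_nhds
        (Filter.tendsto_atTop_add_const_right _ 1 (tendsto_natCast_atTop_atTop.comp hτ))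
    -- the three gaps vanish in the limit
    have hgapbd : ∀ j, ‖X (τ j) - Cc (τ j)‖^2 ≤ B / ((τ j : ℝ)+1) ∧
        ‖X (τ j) - Pf (τ j)‖^2 ≤ B / ((τ j : ℝ)+1) ∧
        ‖Y (τ j) - Ps (τ j)‖^2 ≤ B / ((τ j : ℝ)+1) := by
      intro j
      have h := hgap (τ j)
      have hpos : (0:ℝ) < (τ j : ℝ) + 1 := by positivity
      refine ⟨(le_div_iff₀ hpos).mpr ?_, (le_div_iff₀ hpos).mpr ?_, (le_div_iff₀ hpos).mpr ?_⟩ <;>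
        linarith [h, mul_nonneg hpos.le (sq_nonneg ‖X (τ j) - Cc (τ j)‖),
          mul_nonneg hpos.le (sq_nonneg ‖X (τ j) - Pf (τ j)‖),
          mul_nonneg hpos.le (sq_nonneg ‖Y (τ j) - Ps (τ j)‖)]
    have hlim1 : ‖w.1.1 - w.2.1‖^2 ≤ 0 :=
      le_of_tendsto_of_tendsto' (((hxw.sub hcw).norm).pow 2) hBlim (fun j => (hgapbd j).1)
    have hlim2 : ‖w.1.1 - (w.2.2).fst‖^2 ≤ 0 :=
      le_of_tendsto_of_tendsto' (((hxw.sub hpfw).norm).pow 2) hBlim (fun j => (hgapbd j).2.1)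
    have hlim3 : ‖w.1.2 - (w.2.2).snd‖^2 ≤ 0 :=
      le_of_tendsto_of_tendsto' (((hyw.sub hpsw).norm).pow 2) hBlim (fun j => (hgapbd j).2.2)
    have hzero : ∀ v : E, ‖v‖^2 ≤ 0 → v = 0 := by
      intro v hv
      have h00 : ‖v‖^2 = 0 := le_antisymm hv (sq_nonneg _)
      rwa [pow_eq_zero_iff two_ne_zero, norm_eq_zero] at h00
    have hzeroF : ∀ v : F, ‖v‖^2 ≤ 0 → v = 0 := by
      intro v hv
      have h00 : ‖v‖^2 = 0 := le_antisymm hv (sq_nonneg _)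
      rwa [pow_eq_zero_iff two_ne_zero, norm_eq_zero] at h00
    have hceq : w.2.1 = w.1.1 := (sub_eq_zero.mp (hzero _ hlim1)).symm
    have hpfeq : (w.2.2).fst = w.1.1 := (sub_eq_zero.mp (hzero _ hlim2)).symm
    have hpseq : (w.2.2).snd = w.1.2 := (sub_eq_zero.mp (hzeroF _ hlim3)).symm
    obtain ⟨hw1, hw2, hw3, hw4, hw5, hw6, hw7⟩ := hwS
    have hwxC : w.1.1 ∈ C := hceq ▸ hw3
    have hwyΓ : w.1.2 ∈ Γ w.1.1 := by
      have : (w.2.2).snd ∈ Γ ((w.2.2).fst) := hw5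
      rwa [hpfeq, hpseq] at this
    have hψw : ψ w ≤ V₀ := by
      refine le_of_tendsto ((hψc.tendsto w).comp hconv) (Filter.Eventually.of_forall ?_)
      intro j; exact hψle (τ j)
    have hlower := hmink w.1.1 hwxC w.1.2 hwyΓ hw1 hw2
    have hψweq : ψ w = f w.1.1 + (k:ℝ)*‖w.1.2‖^2 + ‖w.1.1 - xb‖^2
        + ‖w.1.1 - xk‖^2 + ‖w.1.2 - yk‖^2 := rfl
    have hxeq : w.1.1 = xk := by
      have h0 : ‖w.1.1 - xk‖^2 + ‖w.1.2 - yk‖^2 ≤ 0 := by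
        rw [hψweq] at hψw; rw [hV₀def] at hψw hlower; linarith
      exact sub_eq_zero.mp (hzero _ (by linarith [sq_nonneg ‖w.1.2 - yk‖]))
    have hyeq : w.1.2 = yk := by
      have h0 : ‖w.1.1 - xk‖^2 + ‖w.1.2 - yk‖^2 ≤ 0 := by
        rw [hψweq] at hψw; rw [hV₀def] at hψw hlower; linarith
      exact sub_eq_zero.mp (hzeroF _ (by linarith [sq_nonneg ‖w.1.1 - xk‖]))
    have hw22 : w.2.2 = pl2 xk yk := by
      have e := pl2_eta w.2.2
      rw [hpfeq, hpseq, hxeq, hyeq] at e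
      exact e.symm
    have hweq : w = z₀ := by
      have h1' : w.1 = (xk, yk) := Prod.ext hxeq hyeq
      have h2' : w.2 = (xk, pl2 xk yk) := Prod.ext (by rw [hceq, hxeq]) hw22
      exact Prod.ext h1' h2'
    rw [hweq] at hconv
    exact hconv
  -- componentwise limits
  have hXlim : Tendsto X atTop (𝓝 xk) :=
    ((continuous_fst.comp continuous_fst).tendsto z₀).comp hZlim
  have hYlim : Tendsto Y atTop (𝓝 yk) :=
    ((continuous_snd.comp continuous_fst).tendsto z₀).comp hZlim
  have hCclim : Tendsto Cc atTop (𝓝 xk) :=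
    ((continuous_fst.comp continuous_snd).tendsto z₀).comp hZlim
  have hPtlim : Tendsto Pt atTop (𝓝 (pl2 xk yk)) :=
    ((continuous_snd.comp continuous_snd).tendsto z₀).comp hZlim
  have hPflim : Tendsto Pf atTop (𝓝 xk) := (hGfst.tendsto _).comp hPtlim
  have hPslim : Tendsto Ps atTop (𝓝 yk) := (hGsnd.tendsto _).comp hPtlim
  -- eventually all components are strictly inside the balls
  have hevent : ∀ᶠ t in atTop, ‖X t - xb‖ < R ∧ ‖Y t‖ < R ∧ ‖Cc t - xb‖ < R ∧
      ‖Pf t - xb‖ < R ∧ ‖Ps t‖ < R := by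
    have e1 : ∀ᶠ t in atTop, ‖X t - xb‖ < R :=
      (((continuous_norm.comp (continuous_id.sub continuous_const)).tendsto xk).comp
        hXlim).eventually_lt_const hxkR
    have e2 : ∀ᶠ t in atTop, ‖Y t‖ < R :=
      ((continuous_norm.tendsto yk).comp hYlim).eventually_lt_const hykR
    have e3 : ∀ᶠ t in atTop, ‖Cc t - xb‖ < R :=
      (((continuous_norm.comp (continuous_id.sub continuous_const)).tendsto xk).comp
        hCclim).eventually_lt_const hxkR
    have e4 : ∀ᶠ t in atTop, ‖Pf t - xb‖ < R :=
      (((continuous_norm.comp (continuous_id.sub continuous_const)).tendsto xk).comp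
        hPflim).eventually_lt_const hxkR
    have e5 : ∀ᶠ t in atTop, ‖Ps t‖ < R :=
      ((continuous_norm.tendsto yk).comp hPslim).eventually_lt_const hykR
    exact (((e1.and e2).and ((e3.and e4).and e5)).mono (fun t ht =>
      ⟨ht.1.1, ht.1.2, ht.2.1.1, ht.2.1.2, ht.2.2⟩))
  obtain ⟨T₀, hT₀⟩ := Filter.eventually_atTop.mp hevent
  -- abbreviations for the multiplier candidates
  set at' : ℕ → E := fun t => (2:ℝ)•(xb - X t) + (2:ℝ)•(xk - X t)
    + (2*((t:ℝ)+1))•(Cc t - X t) + (2*((t:ℝ)+1))•(Pf t - X t) with hatdef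
  set ct : ℕ → E := fun t => (2*((t:ℝ)+1))•(X t - Cc t) with hctdef
  set vt : ℕ → G := fun t => (2*((t:ℝ)+1))•(pl2 (X t) (Y t) - Pt t) with hvtdef
  set Lam : ℝ := 2*R*((k:ℝ)+2) with hLamdef
  have hk0 : (0:ℝ) ≤ (k:ℝ) := Nat.cast_nonneg k
  have hLam0 : 0 ≤ Lam := by rw [hLamdef]; positivity
  have hΦeq : ∀ (t : ℕ) (u : E) (y : F) (c : E) (p : G), Φ t ((u,y),(c,p)) =
      f u + (k:ℝ)*‖y‖^2 + ‖u - xb‖^2 + ‖u - xk‖^2 + ‖y - yk‖^2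
      + ((t:ℝ)+1)*(‖u - c‖^2 + ‖u - p.fst‖^2 + ‖y - p.snd‖^2) := fun _ _ _ _ _ => rfl
  have hZteq : ∀ t : ℕ, Zt t = ((X t, Y t), (Cc t, Pt t)) := fun t => rfl
  have hdata : ∀ t : ℕ, T₀ ≤ t →
      (pl2 (at' t) (-1 : ℝ) ∈ frechetNC
        {p : WithLp 2 (E × ℝ) | f (WithLp.equiv 2 (E × ℝ) p).1 ≤ (WithLp.equiv 2 (E × ℝ) p).2}
        (pl2 (X t) (f (X t)))) ∧
      ‖at' t‖ ≤ L ∧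
      ct t ∈ frechetNC C (Cc t) ∧
      vt t ∈ frechetNC (svGraph Γ) (Pt t) ∧
      ‖(vt t).snd‖ ≤ Lam ∧ ‖(vt t).fst‖ ≤ κ * Lam ∧
      at' t + (vt t).fst + ct t = (2:ℝ)•(xb - X t) + (2:ℝ)•(xk - X t) := by
    intro t ht
    obtain ⟨hXs, hYs, hCs, hPfs, hPss⟩ := hT₀ t ht
    have htpos : (0:ℝ) < (t:ℝ)+1 := by positivity
    -- (A) the x-slot
    have hδx : 0 < R - ‖X t - xb‖ := by linarith
    have hminx : ∀ u, ‖u - X t‖ < R - ‖X t - xb‖ →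
        f (X t) + ‖X t - xb‖^2 + ‖X t - xk‖^2
          + ((t:ℝ)+1)*(‖X t - Cc t‖^2 + ‖X t - Pf t‖^2) ≤
        f u + ‖u - xb‖^2 + ‖u - xk‖^2 + ((t:ℝ)+1)*(‖u - Cc t‖^2 + ‖u - Pf t‖^2) := by
      intro u hu
      have huR : ‖u - xb‖ ≤ R := by
        have tri : ‖u - xb‖ ≤ ‖u - X t‖ + ‖X t - xb‖ := by
          simpa [dist_eq_norm] using dist_triangle u (X t) xb
        linarith
      have hz' : ((u, Y t), (Cc t, Pt t)) ∈ S :=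
        ⟨huR, hYR t, hCcC t, hCcR t, hPtΓ t, hPfR t, hPsR t⟩
      have cmp := isMinOn_iff.mp (hZmin t) _ hz'
      rw [hZteq t, hΦeq, hΦeq] at cmp
      linarith [cmp]
    have hquad := quad_lower_bound f (X t) xb xk (Cc t) (Pf t)
      (le_of_lt htpos) hminx
    have hamem : pl2 (at' t) (-1 : ℝ) ∈ frechetNC
        {p : WithLp 2 (E × ℝ) | f (WithLp.equiv 2 (E × ℝ) p).1 ≤ (WithLp.equiv 2 (E × ℝ) p).2}
        (pl2 (X t) (f (X t))) := by
      have := frechet_subgrad_of_quad (by positivity : (0:ℝ) ≤ 2+2*((t:ℝ)+1)) hδx hquad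
      simpa only [hatdef] using this
    have hLipx : ∀ u, ‖u - X t‖ < R - ‖X t - xb‖ → f u - f (X t) ≤ L * ‖u - X t‖ := by
      intro u hu
      have tri : ‖u - xb‖ ≤ ‖u - X t‖ + ‖X t - xb‖ := by
        simpa [dist_eq_norm] using dist_triangle u (X t) xb
      exact hLip u (X t) (by linarith) (hXR t)
    have habd : ‖at' t‖ ≤ L := by
      have := norm_subgrad_le_of_quad (by positivity : (0:ℝ) ≤ 2+2*((t:ℝ)+1)) hδx hL hLipx hquad
      simpa only [hatdef] using this
    -- (C) the C-slot
    have hδc : 0 < R - ‖Cc t - xb‖ := by linarith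
    have hminc : ∀ p ∈ C, ‖p - Cc t‖ < R - ‖Cc t - xb‖ → ‖X t - Cc t‖ ≤ ‖X t - p‖ := by
      intro p hp hlt
      have hpR : ‖p - xb‖ ≤ R := by
        have tri : ‖p - xb‖ ≤ ‖p - Cc t‖ + ‖Cc t - xb‖ := by
          simpa [dist_eq_norm] using dist_triangle p (Cc t) xb
        linarith
      have hz' : ((X t, Y t), (p, Pt t)) ∈ S :=
        ⟨hXR t, hYR t, hp, hpR, hPtΓ t, hPfR t, hPsR t⟩
      have cmp := isMinOn_iff.mp (hZmin t) _ hz'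
      rw [hZteq t, hΦeq, hΦeq] at cmp
      have h' : ((t:ℝ)+1)*‖X t - Cc t‖^2 ≤ ((t:ℝ)+1)*‖X t - p‖^2 := by linarith [cmp]
      exact my_sq_le _ _ (norm_nonneg _) (norm_nonneg _) (le_of_mul_le_mul_left h' htpos)
    have hcmem : ct t ∈ frechetNC C (Cc t) := by
      have := frechetNC_of_dist_min (hCcC t) hδc hminc
        (s := 2*((t:ℝ)+1)) (by positivity)
      simpa only [hctdef] using this
    -- (D) the graph slot
    have hδg : 0 < min (R - ‖Pf t - xb‖) (R - ‖Ps t‖) := lt_min (by linarith) (by linarith)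
    have hming : ∀ p ∈ svGraph Γ, ‖p - Pt t‖ < min (R - ‖Pf t - xb‖) (R - ‖Ps t‖) →
        ‖pl2 (X t) (Y t) - Pt t‖ ≤ ‖pl2 (X t) (Y t) - p‖ := by
      intro p hp hlt
      have hsubp : p - Pt t = pl2 (p.fst - Pf t) (p.snd - Ps t) := rfl
      have hf1 : ‖p.fst - Pf t‖ ≤ ‖p - Pt t‖ := by
        rw [hsubp]; exact pl2_fst_norm_le _ _
      have hf2 : ‖p.snd - Ps t‖ ≤ ‖p - Pt t‖ := by
        rw [hsubp]; exact pl2_snd_norm_le _ _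
      have hpfR' : ‖p.fst - xb‖ ≤ R := by
        have tri : ‖p.fst - xb‖ ≤ ‖p.fst - Pf t‖ + ‖Pf t - xb‖ := by
          simpa [dist_eq_norm] using dist_triangle p.fst (Pf t) xb
        have := lt_of_lt_of_le hlt (min_le_left _ _)
        linarith
      have hpsR' : ‖p.snd‖ ≤ R := by
        have tri : ‖p.snd‖ ≤ ‖p.snd - Ps t‖ + ‖Ps t‖ := by
          simpa using norm_add_le (p.snd - Ps t) (Ps t)
        have := lt_of_lt_of_le hlt (min_le_right _ _)
        linarith
      have hz' : ((X t, Y t), (Cc t, p)) ∈ S :=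
        ⟨hXR t, hYR t, hCcC t, hCcR t, hp, hpfR', hpsR'⟩
      have cmp := isMinOn_iff.mp (hZmin t) _ hz'
      rw [hZteq t, hΦeq, hΦeq] at cmp
      have h' : ((t:ℝ)+1)*(‖X t - Pf t‖^2 + ‖Y t - Ps t‖^2) ≤
          ((t:ℝ)+1)*(‖X t - p.fst‖^2 + ‖Y t - p.snd‖^2) := by linarith [cmp]
      have hsq := le_of_mul_le_mul_left h' htpos
      apply my_sq_le _ _ (norm_nonneg _) (norm_nonneg _)
      have hq1 : ‖pl2 (X t) (Y t) - Pt t‖^2 = ‖X t - Pf t‖^2 + ‖Y t - Ps t‖^2 := by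
        rw [show pl2 (X t) (Y t) - Pt t = pl2 (X t - Pf t) (Y t - Ps t) from rfl, norm_pl2_sq]
      have hq2 : ‖pl2 (X t) (Y t) - p‖^2 = ‖X t - p.fst‖^2 + ‖Y t - p.snd‖^2 := by
        rw [show pl2 (X t) (Y t) - p = pl2 (X t - p.fst) (Y t - p.snd) from rfl, norm_pl2_sq]
      rw [hq1, hq2]; exact hsq
    have hvmem : vt t ∈ frechetNC (svGraph Γ) (Pt t) := by
      have := frechetNC_of_dist_min (hPtΓ t) hδg hming
        (s := 2*((t:ℝ)+1)) (by positivity)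
      simpa only [hvtdef] using this
    -- (E) the y-slot : closed form for Y t and the bound on the second component
    have hApos : (0:ℝ) < (k:ℝ)+(t:ℝ)+2 := by positivity
    have hAm : ((k:ℝ)+(t:ℝ)+2) • ((((k:ℝ)+(t:ℝ)+2)⁻¹) • (yk + ((t:ℝ)+1) • Ps t))
        = yk + ((t:ℝ)+1) • Ps t := smul_inv_smul₀ (ne_of_gt hApos) _
    have hmR : ‖(((k:ℝ)+(t:ℝ)+2)⁻¹) • (yk + ((t:ℝ)+1) • Ps t)‖ ≤ R := by
      rw [norm_smul, Real.norm_eq_abs, abs_of_pos (inv_pos.mpr hApos)]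
      have h1 : ‖yk + ((t:ℝ)+1) • Ps t‖ ≤ ((t:ℝ)+2)*R := by
        have h2 : ‖yk + ((t:ℝ)+1) • Ps t‖ ≤ ‖yk‖ + ‖((t:ℝ)+1) • Ps t‖ := norm_add_le _ _
        have h3 : ‖((t:ℝ)+1) • Ps t‖ = ((t:ℝ)+1)*‖Ps t‖ := by
          rw [norm_smul, Real.norm_eq_abs, abs_of_pos htpos]
        have h4 : ((t:ℝ)+1)*‖Ps t‖ ≤ ((t:ℝ)+1)*R :=
          mul_le_mul_of_nonneg_left (hPsR t) (le_of_lt htpos)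
        have := hykR.le
        rw [h3] at h2
        nlinarith
      calc (((k:ℝ)+(t:ℝ)+2)⁻¹) * ‖yk + ((t:ℝ)+1) • Ps t‖
          ≤ (((k:ℝ)+(t:ℝ)+2)⁻¹) * (((t:ℝ)+2)*R) :=
            mul_le_mul_of_nonneg_left h1 (le_of_lt (inv_pos.mpr hApos))
        _ ≤ R := by
            rw [inv_mul_le_iff₀ hApos]
            have := mul_nonneg hk0 hR.le
            nlinarith
    have hz'm : ((X t, (((k:ℝ)+(t:ℝ)+2)⁻¹) • (yk + ((t:ℝ)+1) • Ps t)), (Cc t, Pt t)) ∈ S :=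
      ⟨hXR t, hmR, hCcC t, hCcR t, hPtΓ t, hPfR t, hPsR t⟩
    have cmpy := isMinOn_iff.mp (hZmin t) _ hz'm
    rw [hZteq t, hΦeq, hΦeq] at cmpy
    have hYexp : ∀ y : F, (k:ℝ)*‖y‖^2 + ‖y - yk‖^2 + ((t:ℝ)+1)*‖y - Ps t‖^2
        = ((k:ℝ)+(t:ℝ)+2)*‖y‖^2 - 2*⟪y, yk + ((t:ℝ)+1) • Ps t⟫
          + ‖yk‖^2 + ((t:ℝ)+1)*‖Ps t‖^2 := by
      intro y
      rw [norm_sub_sq_real, norm_sub_sq_real, inner_add_right, real_inner_smul_right]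
      ring
    have hYm : Y t = (((k:ℝ)+(t:ℝ)+2)⁻¹) • (yk + ((t:ℝ)+1) • Ps t) := by
      apply quad_min_unique hApos hAm
      have h1 : (k:ℝ)*‖Y t‖^2 + ‖Y t - yk‖^2 + ((t:ℝ)+1)*‖Y t - Ps t‖^2 ≤
          (k:ℝ)*‖(((k:ℝ)+(t:ℝ)+2)⁻¹) • (yk + ((t:ℝ)+1) • Ps t)‖^2
          + ‖(((k:ℝ)+(t:ℝ)+2)⁻¹) • (yk + ((t:ℝ)+1) • Ps t) - yk‖^2
          + ((t:ℝ)+1)*‖(((k:ℝ)+(t:ℝ)+2)⁻¹) • (yk + ((t:ℝ)+1) • Ps t) - Ps t‖^2 := by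
        linarith [cmpy]
      rw [hYexp (Y t), hYexp _] at h1
      linarith
    have hvsnd : (vt t).snd = (2*((t:ℝ)+1)) • (Y t - Ps t) := by
      simp only [hvtdef]; rfl
    have hvfst : (vt t).fst = (2*((t:ℝ)+1)) • (X t - Pf t) := by
      simp only [hvtdef]; rfl
    have hAsmul : ((k:ℝ)+(t:ℝ)+2) • (Y t - Ps t) = yk - ((k:ℝ)+1) • Ps t := by
      rw [hYm, smul_sub, hAm]
      module
    have hnorm1 : ((k:ℝ)+(t:ℝ)+2) * ‖Y t - Ps t‖ = ‖yk - ((k:ℝ)+1) • Ps t‖ := by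
      rw [← hAsmul, norm_smul, Real.norm_eq_abs, abs_of_pos hApos]
    have hnorm2 : ‖yk - ((k:ℝ)+1) • Ps t‖ ≤ ((k:ℝ)+2)*R := by
      have h2 : ‖yk - ((k:ℝ)+1) • Ps t‖ ≤ ‖yk‖ + ‖((k:ℝ)+1) • Ps t‖ := norm_sub_le _ _
      have h3 : ‖((k:ℝ)+1) • Ps t‖ = ((k:ℝ)+1)*‖Ps t‖ := by
        rw [norm_smul, Real.norm_eq_abs, abs_of_pos (by positivity)]
      have h4 : ((k:ℝ)+1)*‖Ps t‖ ≤ ((k:ℝ)+1)*R :=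
        mul_le_mul_of_nonneg_left (hPsR t) (by positivity)
      have := hykR.le
      rw [h3] at h2
      nlinarith
    have hμ : ‖(vt t).snd‖ ≤ Lam := by
      rw [hvsnd, norm_smul, Real.norm_eq_abs, abs_of_pos (by positivity : (0:ℝ) < 2*((t:ℝ)+1))]
      have h2 : ((t:ℝ)+1) ≤ (k:ℝ)+(t:ℝ)+2 := by linarith
      have h3 : ((t:ℝ)+1)*‖Y t - Ps t‖ ≤ ((k:ℝ)+2)*R := by
        calc ((t:ℝ)+1)*‖Y t - Ps t‖ ≤ ((k:ℝ)+(t:ℝ)+2)*‖Y t - Ps t‖ :=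
              mul_le_mul_of_nonneg_right h2 (norm_nonneg _)
          _ = ‖yk - ((k:ℝ)+1) • Ps t‖ := hnorm1
          _ ≤ ((k:ℝ)+2)*R := hnorm2
      rw [hLamdef]; linarith [h3]
    -- (F) the Aubin bound on the first component
    have haubloc : ∀ x' : E, ‖x' - Pf t‖ < R → ∃ z ∈ Γ x', ‖Ps t - z‖ ≤ κ * ‖Pf t - x'‖ := by
      intro x' hx'
      apply hAub (Pf t) (Ps t) x' (hPfR t) ?_ (hPtΓ t) (hPsR t)
      have tri : ‖x' - xb‖ ≤ ‖x' - Pf t‖ + ‖Pf t - xb‖ := by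
        simpa [dist_eq_norm] using dist_triangle x' (Pf t) xb
      linarith [hPfR t]
    have hβ : ‖(vt t).fst‖ ≤ κ * ‖(vt t).snd‖ :=
      aubin_frechet_norm_bound hκ hR haubloc hvmem
    have hβ2 : ‖(vt t).fst‖ ≤ κ * Lam :=
      le_trans hβ (mul_le_mul_of_nonneg_left hμ hκ)
    -- (G) the sum identity
    have hid : at' t + (vt t).fst + ct t = (2:ℝ)•(xb - X t) + (2:ℝ)•(xk - X t) := by
      rw [hvfst]
      simp only [hatdef, hctdef]
      module
    exact ⟨hamem, habd, hcmem, hvmem, hμ, hβ2, hid⟩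
  -- bounds on the multiplier sequences
  set Bc : ℝ := 6*R + L + κ*Lam with hBcdef
  have hctbd : ∀ t : ℕ, T₀ ≤ t → ‖ct t‖ ≤ Bc := by
    intro t ht
    obtain ⟨h1, h2, h3, h4, h5, h6, h7⟩ := hdata t ht
    have hct' : ct t = ((2:ℝ)•(xb - X t) + (2:ℝ)•(xk - X t)) - at' t - (vt t).fst := by
      rw [← h7]; abel
    have e1 : ‖(2:ℝ)•(xb - X t)‖ ≤ 2*R := by
      rw [norm_smul, Real.norm_eq_abs, abs_of_pos (by norm_num : (0:ℝ) < 2)]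
      have : ‖xb - X t‖ ≤ R := by rw [norm_sub_rev]; exact hXR t
      linarith
    have e2 : ‖(2:ℝ)•(xk - X t)‖ ≤ 4*R := by
      rw [norm_smul, Real.norm_eq_abs, abs_of_pos (by norm_num : (0:ℝ) < 2)]
      have tri : ‖xk - X t‖ ≤ ‖xk - xb‖ + ‖xb - X t‖ := by
        simpa [dist_eq_norm] using dist_triangle xk xb (X t)
      have h8 : ‖xb - X t‖ ≤ R := by rw [norm_sub_rev]; exact hXR t
      have h9 := hxkR.le
      linarith
    calc ‖ct t‖ = ‖((2:ℝ)•(xb - X t) + (2:ℝ)•(xk - X t)) - at' t - (vt t).fst‖ := by rw [hct']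
      _ ≤ ‖((2:ℝ)•(xb - X t) + (2:ℝ)•(xk - X t)) - at' t‖ + ‖(vt t).fst‖ := norm_sub_le _ _
      _ ≤ ‖(2:ℝ)•(xb - X t) + (2:ℝ)•(xk - X t)‖ + ‖at' t‖ + ‖(vt t).fst‖ := by
            linarith [norm_sub_le ((2:ℝ)•(xb - X t) + (2:ℝ)•(xk - X t)) (at' t)]
      _ ≤ (‖(2:ℝ)•(xb - X t)‖ + ‖(2:ℝ)•(xk - X t)‖) + ‖at' t‖ + ‖(vt t).fst‖ := by
            linarith [norm_add_le ((2:ℝ)•(xb - X t)) ((2:ℝ)•(xk - X t))]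
      _ ≤ Bc := by rw [hBcdef]; linarith [h2, h6, e1, e2]
  have hvtbd : ∀ t : ℕ, T₀ ≤ t → ‖vt t‖ ≤ (κ+1)*Lam := by
    intro t ht
    obtain ⟨h1, h2, h3, h4, h5, h6, h7⟩ := hdata t ht
    apply my_sq_le _ _ (norm_nonneg _) (by positivity)
    have hvq : ‖vt t‖^2 = ‖(vt t).fst‖^2 + ‖(vt t).snd‖^2 := by
      have e := norm_pl2_sq (vt t).fst (vt t).snd
      rw [pl2_eta] at e
      exact e
    rw [hvq]
    nlinarith [pow_le_pow_left₀ (norm_nonneg (vt t).fst) h6 2,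
      pow_le_pow_left₀ (norm_nonneg (vt t).snd) h5 2,
      mul_nonneg (mul_nonneg hκ hLam0) hLam0, sq_nonneg Lam]
  -- extract convergent subsequences
  have hbox : IsCompact ((Metric.closedBall (0:E) L) ×ˢ
      ((Metric.closedBall (0:E) Bc) ×ˢ (Metric.closedBall (0:G) ((κ+1)*Lam)))) :=
    (isCompact_closedBall _ _).prod
      ((isCompact_closedBall _ _).prod (isCompact_closedBall _ _))
  set W : ℕ → E × (E × G) := fun j => (at' (j+T₀), (ct (j+T₀), vt (j+T₀))) with hWdef
  have hWmem : ∀ j, W j ∈ (Metric.closedBall (0:E) L) ×ˢ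
      ((Metric.closedBall (0:E) Bc) ×ˢ (Metric.closedBall (0:G) ((κ+1)*Lam))) := by
    intro j
    obtain ⟨h1, h2, h3, h4, h5, h6, h7⟩ := hdata (j+T₀) (Nat.le_add_left _ _)
    refine ⟨?_, ?_, ?_⟩ <;> rw [Metric.mem_closedBall, dist_zero_right]
    · exact h2
    · exact hctbd _ (Nat.le_add_left _ _)
    · exact hvtbd _ (Nat.le_add_left _ _)
  obtain ⟨wlim, hwlim, φ, hφ, hWconv⟩ := hbox.tendsto_subseq hWmem
  set τ : ℕ → ℕ := fun j => φ j + T₀ with hτdef2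
  have hτ2 : Tendsto τ atTop atTop :=
    Filter.tendsto_atTop_mono (fun j => le_trans (hφ.le_apply) (Nat.le_add_right _ _)) tendsto_id
  have hτT₀ : ∀ j, T₀ ≤ τ j := fun j => Nat.le_add_left _ _
  have haconv : Tendsto (fun j => at' (τ j)) atTop (𝓝 wlim.1) :=
    (continuous_fst.tendsto wlim).comp hWconv
  have hcconv : Tendsto (fun j => ct (τ j)) atTop (𝓝 wlim.2.1) :=
    ((continuous_fst.comp continuous_snd).tendsto wlim).comp hWconv
  have hvconv : Tendsto (fun j => vt (τ j)) atTop (𝓝 wlim.2.2) :=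
    ((continuous_snd.comp continuous_snd).tendsto wlim).comp hWconv
  have hvfconv : Tendsto (fun j => (vt (τ j)).fst) atTop (𝓝 (wlim.2.2).fst) :=
    (hGfst.tendsto _).comp hvconv
  have hXτ : Tendsto (fun j => X (τ j)) atTop (𝓝 xk) := hXlim.comp hτ2
  have hCcτ : Tendsto (fun j => Cc (τ j)) atTop (𝓝 xk) := hCclim.comp hτ2
  have hPtτ : Tendsto (fun j => Pt (τ j)) atTop (𝓝 (pl2 xk yk)) := hPtlim.comp hτ2
  -- membership of the limits in the limiting objects
  have hamem : wlim.1 ∈ limSubdiff f xk := by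
    refine ⟨fun j => pl2 (X (τ j)) (f (X (τ j))), fun j => pl2 (at' (τ j)) (-1 : ℝ),
      ?_, ?_, ?_, ?_⟩
    · intro j; exact le_refl (f (X (τ j)))
    · have hc : Continuous (fun u : E => pl2 u (f u)) :=
        ((WithLp.prodContinuousLinearEquiv 2 ℝ E ℝ).symm.continuous).comp
          (continuous_id.prodMk hfc)
      exact (hc.tendsto xk).comp hXτ
    · intro j; exact (hdata (τ j) (hτT₀ j)).1
    · have hc : Continuous (fun u : E => pl2 u (-1 : ℝ)) :=
        ((WithLp.prodContinuousLinearEquiv 2 ℝ E ℝ).symm.continuous).comp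
          (continuous_id.prodMk continuous_const)
      exact (hc.tendsto _).comp haconv
  have hvmem' : wlim.2.2 ∈ limitingNC (svGraph Γ) (pl2 xk yk) :=
    ⟨fun j => Pt (τ j), fun j => vt (τ j), fun j => hPtΓ (τ j), hPtτ,
      fun j => (hdata (τ j) (hτT₀ j)).2.2.2.1, hvconv⟩
  have hbmem : (wlim.2.2).fst ∈ coderiv Γ xk yk (-(wlim.2.2).snd) := by
    have e : pl2 ((wlim.2.2).fst) (-(-(wlim.2.2).snd)) = wlim.2.2 := by
      rw [neg_neg]; exact pl2_eta _
    show pl2 ((wlim.2.2).fst) (-(-(wlim.2.2).snd)) ∈ limitingNC (svGraph Γ) (pl2 xk yk)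
    rw [e]; exact hvmem'
  have hcmem : wlim.2.1 ∈ limitingNC C xk :=
    ⟨fun j => Cc (τ j), fun j => ct (τ j), fun j => hCcC (τ j), hCcτ,
      fun j => (hdata (τ j) (hτT₀ j)).2.2.1, hcconv⟩
  -- the sum identity in the limit
  have hsum : wlim.1 + (wlim.2.2).fst + wlim.2.1 = (2:ℝ) • (xb - xk) := by
    have hL1 : Tendsto (fun j => at' (τ j) + (vt (τ j)).fst + ct (τ j)) atTop
        (𝓝 (wlim.1 + (wlim.2.2).fst + wlim.2.1)) :=
      (haconv.add hvfconv).add hcconv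
    have hR1 : Tendsto (fun j => (2:ℝ)•(xb - X (τ j)) + (2:ℝ)•(xk - X (τ j))) atTop
        (𝓝 ((2:ℝ)•(xb - xk) + (2:ℝ)•(xk - xk))) := by
      have h1 : Tendsto (fun j => xb - X (τ j)) atTop (𝓝 (xb - xk)) :=
        tendsto_const_nhds.sub hXτ
      have h2 : Tendsto (fun j => xk - X (τ j)) atTop (𝓝 (xk - xk)) :=
        tendsto_const_nhds.sub hXτ
      exact (h1.const_smul _).add (h2.const_smul _)
    have heq : (fun j => at' (τ j) + (vt (τ j)).fst + ct (τ j)) =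
        (fun j => (2:ℝ)•(xb - X (τ j)) + (2:ℝ)•(xk - X (τ j))) := by
      funext j; exact (hdata (τ j) (hτT₀ j)).2.2.2.2.2.2
    rw [heq] at hL1
    have h3 := tendsto_nhds_unique hL1 hR1
    rw [h3, sub_self, smul_zero, add_zero]
  exact ⟨-(wlim.2.2).snd, wlim.1, hamem, (wlim.2.2).fst, hbmem, wlim.2.1, hcmem, hsum⟩



end InnerLemma

set_option maxHeartbeats 2000000 in
theorem local_minimizer_is_dAM_stationary (n l : ℕ)
    (f : EuclideanSpace ℝ (Fin n) → ℝ) (hf : LocallyLipschitz f)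
    (Γ : EuclideanSpace ℝ (Fin n) → Set (EuclideanSpace ℝ (Fin l)))
    (hΓ : IsClosed (svGraph Γ))
    (C : Set (EuclideanSpace ℝ (Fin n))) (hCne : C.Nonempty) (hCcl : IsClosed C)
    (xb : EuclideanSpace ℝ (Fin n)) (hfeas : xb ∈ C ∧ 0 ∈ Γ xb)
    (hmin : IsLocalMinOn f {x | x ∈ C ∧ 0 ∈ Γ x} xb)
    (hAubin : AubinAt Γ xb 0) :
    ∃ (xk εk : ℕ → EuclideanSpace ℝ (Fin n)) (yk lk : ℕ → EuclideanSpace ℝ (Fin l)),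
      Tendsto xk atTop (𝓝 xb) ∧ Tendsto εk atTop (𝓝 0) ∧ Tendsto yk atTop (𝓝 0) ∧
      ∀ k, ∃ a ∈ limSubdiff f (xk k), ∃ b ∈ coderiv Γ (xk k) (yk k) (lk k),
        ∃ c ∈ limitingNC C (xk k), εk k = a + b + c := by
  classical
  obtain ⟨hxbC, hxbΓ⟩ := hfeas
  have hfc : Continuous f := hf.continuous
  -- Lipschitz data near xb
  obtain ⟨K, t, ht, hKLip⟩ := hf xb
  obtain ⟨rL, hrL, hrLsub⟩ := Metric.mem_nhds_iff.mp ht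
  -- local minimality radius
  obtain ⟨rm, hrm, hrmsub⟩ := Metric.mem_nhdsWithin_iff.mp hmin
  -- Aubin data
  obtain ⟨U, hU, V, hV, κ, hκ, hAubin'⟩ := hAubin
  obtain ⟨rU, hrU, hrUsub⟩ := Metric.mem_nhds_iff.mp hU
  obtain ⟨rV, hrV, hrVsub⟩ := Metric.mem_nhds_iff.mp hV
  set L : ℝ := (K : ℝ) with hLdef
  have hL0 : 0 ≤ L := K.coe_nonneg
  set R : ℝ := min (min (rL/2) (rm/2)) (min (rU/4) (rV/2)) with hRdef
  have hR : 0 < R := by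
    rw [hRdef]
    exact lt_min (lt_min (by linarith) (by linarith)) (lt_min (by linarith) (by linarith))
  have hRrL : R < rL := lt_of_le_of_lt (le_trans (min_le_left _ _) (min_le_left _ _)) (by linarith)
  have hRrm : R < rm := lt_of_le_of_lt (le_trans (min_le_left _ _) (min_le_right _ _)) (by linarith)
  have hRrU : 2*R < rU := by
    have : R ≤ rU/4 := le_trans (min_le_right _ _) (min_le_left _ _)
    linarith
  have hRrV : R < rV := lt_of_le_of_lt (le_trans (min_le_right _ _) (min_le_right _ _)) (by linarith)
  -- ball forms of the Lipschitz and Aubin hypotheses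
  have hLip' : ∀ u v : EuclideanSpace ℝ (Fin n), ‖u - xb‖ ≤ R → ‖v - xb‖ ≤ R → f u - f v ≤ L * ‖u - v‖ := by
    intro u v hu hv
    have hus : u ∈ t := hrLsub (by rw [Metric.mem_ball, dist_eq_norm]; linarith)
    have hvs : v ∈ t := hrLsub (by rw [Metric.mem_ball, dist_eq_norm]; linarith)
    have := hKLip.dist_le_mul u hus v hvs
    rw [Real.dist_eq, dist_eq_norm] at this
    calc f u - f v ≤ |f u - f v| := le_abs_self _
      _ ≤ L * ‖u - v‖ := this
  have hAub' : ∀ g : EuclideanSpace ℝ (Fin n), ∀ w : EuclideanSpace ℝ (Fin l), ∀ x' : EuclideanSpace ℝ (Fin n), ‖g - xb‖ ≤ R → ‖x' - xb‖ ≤ 2*R → w ∈ Γ g →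
      ‖w‖ ≤ R → ∃ z ∈ Γ x', ‖w - z‖ ≤ κ * ‖g - x'‖ := by
    intro g w x' hg hx' hwΓ hw
    have hgU : g ∈ U := hrUsub (by rw [Metric.mem_ball, dist_eq_norm]; linarith)
    have hx'U : x' ∈ U := hrUsub (by rw [Metric.mem_ball, dist_eq_norm]; linarith)
    have hwV : w ∈ V := hrVsub (by
      rw [Metric.mem_ball, dist_eq_norm, sub_zero]; linarith)
    exact hAubin' g hgU x' hx'U w ⟨hwΓ, hwV⟩
  -- the outer constrained problems
  set Kset : Set (EuclideanSpace ℝ (Fin n) × EuclideanSpace ℝ (Fin l)) :=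
    {q | q.1 ∈ C ∧ q.2 ∈ Γ q.1 ∧ ‖q.1 - xb‖ ≤ R ∧ ‖q.2‖ ≤ R} with hKsetdef
  have hGr : IsClosed {q : EuclideanSpace ℝ (Fin n) × EuclideanSpace ℝ (Fin l) | q.2 ∈ Γ q.1} := by
    have : {q : EuclideanSpace ℝ (Fin n) × EuclideanSpace ℝ (Fin l) | q.2 ∈ Γ q.1} =
        (WithLp.prodContinuousLinearEquiv 2 ℝ (EuclideanSpace ℝ (Fin n)) (EuclideanSpace ℝ (Fin l))).symm ⁻¹' (svGraph Γ) := rfl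
    rw [this]
    exact hΓ.preimage (WithLp.prodContinuousLinearEquiv 2 ℝ (EuclideanSpace ℝ (Fin n)) (EuclideanSpace ℝ (Fin l))).symm.continuous
  have hKcl : IsClosed Kset := by
    apply IsClosed.inter (hCcl.preimage continuous_fst)
    apply IsClosed.inter hGr
    apply IsClosed.inter
    · exact isClosed_le ((continuous_fst.sub continuous_const).norm) continuous_const
    · exact isClosed_le (continuous_snd.norm) continuous_const
  have hKsub : Kset ⊆ Metric.closedBall xb R ×ˢ Metric.closedBall (0:EuclideanSpace ℝ (Fin l)) R := by
    rintro q ⟨_, _, h3, h4⟩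
    refine ⟨?_, ?_⟩
    · simpa [Metric.mem_closedBall, dist_eq_norm] using h3
    · simpa [Metric.mem_closedBall, dist_eq_norm] using h4
  have hKcomp : IsCompact Kset :=
    IsCompact.of_isClosed_subset ((isCompact_closedBall _ _).prod (isCompact_closedBall _ _))
      hKcl hKsub
  have hKne : ((xb, (0:EuclideanSpace ℝ (Fin l))) : EuclideanSpace ℝ (Fin n) × EuclideanSpace ℝ (Fin l)) ∈ Kset := by
    refine ⟨hxbC, hxbΓ, by simp [hR.le], by simp [hR.le]⟩
  set Pk : ℕ → (EuclideanSpace ℝ (Fin n) × EuclideanSpace ℝ (Fin l)) → ℝ :=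
    fun k q => f q.1 + (k:ℝ)*‖q.2‖^2 + ‖q.1 - xb‖^2 with hPkdef
  have hPkc : ∀ k : ℕ, Continuous (Pk k) := by
    intro k
    exact ((hfc.comp continuous_fst).add
      (continuous_const.mul ((continuous_snd.norm).pow 2))).add
      (((continuous_fst.sub continuous_const).norm).pow 2)
  have hEx : ∀ k : ℕ, ∃ q ∈ Kset, IsMinOn (Pk k) Kset q := fun k =>
    hKcomp.exists_isMinOn ⟨_, hKne⟩ (hPkc k).continuousOn
  choose Q hQmem hQmin using hEx
  set xx : ℕ → EuclideanSpace ℝ (Fin n) := fun k => (Q k).1 with hxxdef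
  set yy : ℕ → EuclideanSpace ℝ (Fin l) := fun k => (Q k).2 with hyydef
  have hxxC : ∀ k, xx k ∈ C := fun k => (hQmem k).1
  have hyyΓ : ∀ k, yy k ∈ Γ (xx k) := fun k => (hQmem k).2.1
  have hxxR : ∀ k, ‖xx k - xb‖ ≤ R := fun k => (hQmem k).2.2.1
  have hyyR : ∀ k, ‖yy k‖ ≤ R := fun k => (hQmem k).2.2.2
  have hPkeq : ∀ (k : ℕ) (q : EuclideanSpace ℝ (Fin n) × EuclideanSpace ℝ (Fin l)), Pk k q = f q.1 + (k:ℝ)*‖q.2‖^2 + ‖q.1 - xb‖^2 :=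
    fun _ _ => rfl
  have hQeq : ∀ k, Q k = (xx k, yy k) := fun k => rfl
  have hval : ∀ k : ℕ, f (xx k) + (k:ℝ)*‖yy k‖^2 + ‖xx k - xb‖^2 ≤ f xb := by
    intro k
    have h1 := isMinOn_iff.mp (hQmin k) _ hKne
    rw [hQeq k, hPkeq, hPkeq] at h1
    simpa using h1
  have hflow : ∀ k, f xb - L*R ≤ f (xx k) := by
    intro k
    have h1 := hLip' xb (xx k) (by simp [hR.le]) (hxxR k)
    have h2 : ‖xb - xx k‖ ≤ R := by rw [norm_sub_rev]; exact hxxR k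
    have h3 := mul_le_mul_of_nonneg_left h2 hL0
    linarith
  -- yy tends to zero
  have hyysq : Tendsto (fun k => ‖yy k‖^2) atTop (𝓝 0) := by
    apply tendsto_of_tendsto_of_tendsto_of_le_of_le' tendsto_const_nhds
      (tendsto_const_div_atTop_nhds_zero_nat (L*R))
    · exact Filter.Eventually.of_forall (fun k => sq_nonneg _)
    · rw [Filter.eventually_atTop]
      refine ⟨1, fun k hk => ?_⟩
      have hkpos : (0:ℝ) < (k:ℝ) := by exact_mod_cast hk
      rw [le_div_iff₀ hkpos]
      have h1 := hval k
      have h2 := hflow k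
      have h3 := sq_nonneg ‖xx k - xb‖
      linarith
  have hyylim : Tendsto yy atTop (𝓝 0) := by
    rw [tendsto_zero_iff_norm_tendsto_zero]
    have h1 : Tendsto (fun k => Real.sqrt (‖yy k‖^2)) atTop (𝓝 (Real.sqrt 0)) :=
      (Real.continuous_sqrt.tendsto 0).comp hyysq
    rw [Real.sqrt_zero] at h1
    refine h1.congr (fun k => ?_)
    rw [Real.sqrt_sq (norm_nonneg _)]
  -- xx tends to xb
  have hQlim : Tendsto Q atTop (𝓝 ((xb, (0:EuclideanSpace ℝ (Fin l))))) := by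
    apply tendsto_of_subseq_tendsto
    intro ns hns
    obtain ⟨w, hwK, ms, hms, hconv⟩ := hKcomp.tendsto_subseq (fun j => hQmem (ns j))
    refine ⟨ms, ?_⟩
    have hτ : Tendsto (fun j => ns (ms j)) atTop atTop := hns.comp hms.tendsto_atTop
    have hxw : Tendsto (fun j => xx (ns (ms j))) atTop (𝓝 w.1) :=
      (continuous_fst.tendsto w).comp hconv
    have hyw : Tendsto (fun j => yy (ns (ms j))) atTop (𝓝 w.2) :=
      (continuous_snd.tendsto w).comp hconv
    have hw2 : w.2 = 0 := tendsto_nhds_unique hyw (hyylim.comp hτ)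
    obtain ⟨hw1C, hw2Γ, hw1R, _⟩ := hwK
    have hw1Γ : 0 ∈ Γ w.1 := hw2 ▸ hw2Γ
    have hvw : f w.1 + ‖w.1 - xb‖^2 ≤ f xb := by
      have hg : Continuous (fun u : EuclideanSpace ℝ (Fin n) => f u + ‖u - xb‖^2) :=
        hfc.add (((continuous_id.sub continuous_const).norm).pow 2)
      refine le_of_tendsto ((hg.tendsto w.1).comp hxw) (Filter.Eventually.of_forall fun j => ?_)
      have h1 := hval (ns (ms j))
      have h2 : (0:ℝ) ≤ ((ns (ms j) : ℕ):ℝ)*‖yy (ns (ms j))‖^2 :=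
        mul_nonneg (Nat.cast_nonneg _) (sq_nonneg _)
      simp only [Function.comp]
      linarith
    have hlower : f xb ≤ f w.1 := by
      apply hrmsub
      refine ⟨?_, hw1C, hw1Γ⟩
      rw [Metric.mem_ball, dist_eq_norm]
      linarith [hw1R]
    have hw1 : w.1 = xb := by
      have h0 : ‖w.1 - xb‖^2 ≤ 0 := by linarith
      have h00 : ‖w.1 - xb‖^2 = 0 := le_antisymm h0 (sq_nonneg _)
      rw [pow_eq_zero_iff two_ne_zero, norm_eq_zero, sub_eq_zero] at h00
      exact h00
    have hweq : w = ((xb, (0:EuclideanSpace ℝ (Fin l))) : EuclideanSpace ℝ (Fin n) × EuclideanSpace ℝ (Fin l)) := Prod.ext hw1 hw2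
    rw [hweq] at hconv
    exact hconv
  have hxxlim : Tendsto xx atTop (𝓝 xb) := (continuous_fst.tendsto _).comp hQlim
  -- eventually strictly inside the balls
  have hev : ∀ᶠ k in atTop, ‖xx k - xb‖ < R ∧ ‖yy k‖ < R := by
    have e1 : ∀ᶠ k in atTop, ‖xx k - xb‖ < R := by
      have h1 : Tendsto (fun k => ‖xx k - xb‖) atTop (𝓝 ‖xb - xb‖) :=
        ((continuous_norm.comp (continuous_id.sub continuous_const)).tendsto xb).comp hxxlim
      apply h1.eventually_lt_const
      simp [hR]
    have e2 : ∀ᶠ k in atTop, ‖yy k‖ < R := by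
      have h1 : Tendsto (fun k => ‖yy k‖) atTop (𝓝 (0:ℝ)) := by
        simpa [Function.comp_def] using (continuous_norm.tendsto (0:EuclideanSpace ℝ (Fin l))).comp hyylim
      exact h1.eventually_lt_const hR
    exact e1.and e2
  obtain ⟨N, hN⟩ := Filter.eventually_atTop.mp hev
  -- apply the inner lemma at each index
  have H : ∀ j : ℕ, ∃ lam : EuclideanSpace ℝ (Fin l), ∃ a ∈ limSubdiff f (xx (j+N)),
      ∃ b ∈ coderiv Γ (xx (j+N)) (yy (j+N)) lam, ∃ c ∈ limitingNC C (xx (j+N)),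
      a + b + c = (2:ℝ) • (xb - xx (j+N)) := by
    intro j
    have hNj := hN (j+N) (Nat.le_add_left _ _)
    apply inner_stationarity f hfc Γ hΓ C hCcl xb R L κ hR hL0 hκ.le hLip' hAub' (j+N)
      (xx (j+N)) (yy (j+N)) (hxxC _) (hyyΓ _) hNj.1 hNj.2
    intro x hx y hy hxR hyR
    have h1 := isMinOn_iff.mp (hQmin (j+N)) (x, y) ⟨hx, hy, hxR, hyR⟩
    rw [hQeq (j+N), hPkeq, hPkeq] at h1
    exact h1
  choose lam a ha b hb c hc heq using H
  refine ⟨fun j => xx (j+N), fun j => (2:ℝ) • (xb - xx (j+N)), fun j => yy (j+N), lam,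
    ?_, ?_, ?_, ?_⟩
  · exact hxxlim.comp (tendsto_add_atTop_nat N)
  · have h1 : Tendsto (fun j => (2:ℝ) • (xb - xx (j+N))) atTop (𝓝 ((2:ℝ) • (xb - xb))) := by
      have h2 : Tendsto (fun j => xx (j+N)) atTop (𝓝 xb) :=
        hxxlim.comp (tendsto_add_atTop_nat N)
      exact (tendsto_const_nhds.sub h2).const_smul _
    simpa using h1
  · exact hyylim.comp (tendsto_add_atTop_nat N)
  · intro j
    exact ⟨a j, ha j, b j, hb j, c j, hc j, (heq j).symm⟩
end
end
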